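/- arXiv:2109.05643 — 15 statements merged into one kernel-verified Lean document; each statement's English description precedes it below -/
import Mathlib

section
/- Let (A,∘) be a right normal band, let F be a proper filter of A, and let a ∈ A \ F. Then the set F_a = { b ∈ A : f∘a ≲ b for some f ∈ F } is a filter of A that contains a and contains F. -/
/-- `F` is a filter of the right normal band `(A, op)`: a nonempty subset
closed under `op` and upward closed under `≲` (`a ≲ b` iff `op b a = a`). -/
def IsRNBFilter {A : Type*} (op : A → A → A) (F : Set A) : Prop :=
  F.Nonempty ∧ (∀ a ∈ F, ∀ b ∈ F, op a b ∈ F) ∧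
    (∀ a ∈ F, ∀ b, op b a = a → b ∈ F)

/-- If `F` is a proper filter of a right normal band `(A, op)` and `a ∉ F`,
then `F_a = { b : op f a ≲ b for some f ∈ F }` is a filter of `A`
containing `a` and containing `F`. -/
theorem stmt1 {A : Type*} (op : A → A → A)
    (hassoc : ∀ x y z, op (op x y) z = op x (op y z))
    (hidem : ∀ x, op x x = x)
    (hrnb : ∀ x y z, op (op x y) z = op (op y x) z)
    (F : Set A) (hF : IsRNBFilter op F) (hproper : F ≠ Set.univ)
    (a : A) (ha : a ∉ F) :
    IsRNBFilter op {b | ∃ f ∈ F, op b (op f a) = op f a} ∧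
    a ∈ {b | ∃ f ∈ F, op b (op f a) = op f a} ∧
    F ⊆ {b | ∃ f ∈ F, op b (op f a) = op f a} := by
  obtain ⟨⟨f0, hf0⟩, hmul, hup⟩ := hF
  have hamem : a ∈ {b | ∃ f ∈ F, op b (op f a) = op f a} := by
    exact ⟨f0, hf0, by rw [← hassoc, hrnb, hassoc, hidem]⟩
  refine ⟨⟨⟨a, hamem⟩, ?_, ?_⟩, hamem, ?_⟩
  · rintro b ⟨f, hf, hb⟩ c ⟨g, hg, hc⟩
    refine ⟨op f g, hmul f hf g hg, ?_⟩
    have key : op (op f g) a = op g (op f a) := by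
      rw [← hassoc, hrnb, hassoc]
    have key2 : op g (op f a) = op f (op g a) := by
      rw [← hassoc, hrnb, hassoc]
    have h1 : op c (op g (op f a)) = op g (op f a) := by
      rw [key2, ← hassoc, hrnb, hassoc, hc]
    have h2 : op b (op g (op f a)) = op g (op f a) := by
      rw [← hassoc, hrnb, hassoc, hb]
    rw [key, hassoc, h1, h2]
  · rintro b ⟨f, hf, hb⟩ c hc
    exact ⟨f, hf, by rw [← hb, ← hassoc, hc, hb]⟩
  · intro g hg
    exact ⟨g, hg, by rw [← hassoc, hidem]⟩
end

section
/- Let (A,∘) be a right normal band and F a proper filter of A. Define the relation ε_F on A by (a,b) ∈ ε_F iff there exists e ∈ F with e∘a = e∘b. Then ε_F is a congruence on (A,∘) (an equivalence relation such that (a,b) ∈ ε_F and (c,d) ∈ ε_F imply (a∘c, b∘d) ∈ ε_F), and both F and its complement A \ F are unions of ε_F-classes. -/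
/-- The relation `ε_F`: `(a,b) ∈ ε_F` iff `op e a = op e b` for some `e ∈ F`. -/
def RNBeps {A : Type*} (op : A → A → A) (F : Set A) (a b : A) : Prop :=
  ∃ e ∈ F, op e a = op e b

/-- If `F` is a proper filter of a right normal band `(A, op)`, then `ε_F` is
a congruence on `(A, op)` (an equivalence relation compatible with `op`), and
both `F` and its complement are unions of `ε_F`-classes. -/
theorem stmt3 {A : Type*} (op : A → A → A)
    (hassoc : ∀ x y z, op (op x y) z = op x (op y z))
    (hidem : ∀ x, op x x = x)
    (hrnb : ∀ x y z, op (op x y) z = op (op y x) z)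
    (F : Set A) (hF : IsRNBFilter op F) (hproper : F ≠ Set.univ) :
    -- equivalence relation
    (∀ a, RNBeps op F a a) ∧
    (∀ a b, RNBeps op F a b → RNBeps op F b a) ∧
    (∀ a b c, RNBeps op F a b → RNBeps op F b c → RNBeps op F a c) ∧
    -- compatibility with op
    (∀ a b c d, RNBeps op F a b → RNBeps op F c d →
      RNBeps op F (op a c) (op b d)) ∧
    -- F and its complement are unions of ε_F-classes
    (∀ a b, RNBeps op F a b → (a ∈ F ↔ b ∈ F)) := by
  obtain ⟨⟨e0, he0⟩, hmul, hup⟩ := hF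
  -- key: if e∘a = e∘b and f ∈ F then (e∘f)∘a = (e∘f)∘b
  have key : ∀ e ∈ F, ∀ f ∈ F, ∀ a b, op e a = op e b →
      op (op e f) a = op (op e f) b := by
    intro e he f hf a b h
    calc op (op e f) a = op (op f e) a := hrnb e f a
      _ = op f (op e a) := hassoc f e a
      _ = op f (op e b) := by rw [h]
      _ = op (op f e) b := (hassoc f e b).symm
      _ = op (op e f) b := (hrnb f e b)
  refine ⟨fun a => ⟨e0, he0, rfl⟩,
    fun a b ⟨e, he, h⟩ => ⟨e, he, h.symm⟩,
    ?_, ?_, ?_⟩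
  · rintro a b c ⟨e, he, h1⟩ ⟨f, hf, h2⟩
    refine ⟨op e f, hmul e he f hf, ?_⟩
    calc op (op e f) a = op (op e f) b := key e he f hf a b h1
      _ = op e (op f b) := hassoc e f b
      _ = op e (op f c) := by rw [h2]
      _ = op (op e f) c := (hassoc e f c).symm
  · rintro a b c d ⟨e, he, h1⟩ ⟨f, hf, h2⟩
    refine ⟨op e f, hmul e he f hf, ?_⟩
    set g := op e f with hg
    have hgab : op g a = op g b := key e he f hf a b h1
    have hgcd : op g c = op g d := by
      calc op g c = op e (op f c) := hassoc e f c
        _ = op e (op f d) := by rw [h2]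
        _ = op g d := (hassoc e f d).symm
    calc op g (op a c) = op (op g a) c := (hassoc g a c).symm
      _ = op (op g b) c := by rw [hgab]
      _ = op (op b g) c := hrnb g b c
      _ = op b (op g c) := hassoc b g c
      _ = op b (op g d) := by rw [hgcd]
      _ = op (op b g) d := (hassoc b g d).symm
      _ = op (op g b) d := hrnb b g d
      _ = op g (op b d) := hassoc g b d
  · have half : ∀ a b, (∃ e ∈ F, op e a = op e b) → a ∈ F → b ∈ F := by
      rintro a b ⟨e, he, h⟩ ha
      have hea : op e a ∈ F := hmul e he a ha
      have heb : op e b ∈ F := h ▸ hea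
      refine hup (op e b) heb b ?_
      calc op b (op e b) = op (op b e) b := (hassoc b e b).symm
        _ = op (op e b) b := hrnb b e b
        _ = op e (op b b) := hassoc e b b
        _ = op e b := by rw [hidem]
    exact fun a b h => ⟨half a b h, half b a ⟨h.choose, h.choose_spec.1, h.choose_spec.2.symm⟩⟩
end

section
/- Let (A,∘) be a right normal band and let a,b ∈ A with a ≰ b (that is, a ≠ a∘b). Then there exists a maximally (a,b)-separating filter in A, i.e. an (a,b)-separating filter that is maximal under inclusion among (a,b)-separating filters. -/
/-- `F` is an `(a,b)`-separating filter: a filter containing `a` such that no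
`e ∈ F` has `op e a = op e b`. -/
def IsSepFilter {A : Type*} (op : A → A → A) (a b : A) (F : Set A) : Prop :=
  IsRNBFilter op F ∧ a ∈ F ∧ ∀ e ∈ F, op e a ≠ op e b

/-- If `(A, op)` is a right normal band and `a ≰ b` (i.e. `a ≠ op a b`),
then there exists a maximally `(a,b)`-separating filter: an `(a,b)`-separating
filter that is maximal under inclusion among `(a,b)`-separating filters. -/
theorem stmt4 {A : Type*} (op : A → A → A)
    (hassoc : ∀ x y z, op (op x y) z = op x (op y z))
    (hidem : ∀ x, op x x = x)
    (hrnb : ∀ x y z, op (op x y) z = op (op y x) z)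
    (a b : A) (hab : a ≠ op a b) :
    ∃ F : Set A, IsSepFilter op a b F ∧
      ∀ G : Set A, IsSepFilter op a b G → F ⊆ G → F = G := by
  set F₀ : Set A := {x | op x a = a} with hF0
  have hF₀sep : IsSepFilter op a b F₀ := by
    refine ⟨⟨⟨a, hidem a⟩, ?_, ?_⟩, hidem a, ?_⟩
    · intro x hx y hy
      show op (op x y) a = a
      rw [hassoc, hy, hx]
    · intro x hx z hz
      show op z a = a
      have : op z a = op z (op x a) := by rw [hx]
      rw [this, ← hassoc, hz, hx]
    · intro e he heq
      apply hab
      have ha : a = op e b := by rw [← heq, he]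
      calc a = op e b := ha
        _ = op e (op b b) := by rw [hidem]
        _ = op (op e b) b := by rw [hassoc]
        _ = op a b := by rw [← ha]
  obtain ⟨M, hM0, hMmax⟩ := zorn_subset_nonempty {F | IsSepFilter op a b F}
    (fun c hc hchain hcne => by
      obtain ⟨F, hFc⟩ := hcne
      refine ⟨⋃₀ c, ⟨⟨⟨a, F, hFc, (hc hFc).2.1⟩, ?_, ?_⟩,
        ⟨F, hFc, (hc hFc).2.1⟩, ?_⟩, fun s hs => Set.subset_sUnion_of_mem hs⟩
      · rintro x ⟨G, hGc, hxG⟩ y ⟨H, hHc, hyH⟩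
        rcases hchain.total hGc hHc with h | h
        · exact ⟨H, hHc, (hc hHc).1.2.1 x (h hxG) y hyH⟩
        · exact ⟨G, hGc, (hc hGc).1.2.1 x hxG y (h hyH)⟩
      · rintro x ⟨G, hGc, hxG⟩ z hz
        exact ⟨G, hGc, (hc hGc).1.2.2 x hxG z hz⟩
      · rintro e ⟨G, hGc, heG⟩
        exact (hc hGc).2.2 e heG) F₀ hF₀sep
  exact ⟨M, hMmax.prop, fun G hG hMG => (hMmax.eq_of_ge (y := G) hG hMG).symm⟩
end

section
/- Let (A,∘) be a right normal band, let a,b ∈ A with a ≰ b (that is, a ≠ a∘b), let F be a maximally (a,b)-separating filter in A, and let y ∈ A \ F. Then there exists f ∈ F such that (f∘y)∘a = (f∘y)∘b. -/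
/-- If `(A, op)` is a right normal band with `a ≰ b` (i.e. `a ≠ op a b`),
`F` is a maximally `(a,b)`-separating filter, and `y ∉ F`, then there exists
`f ∈ F` with `(f∘y)∘a = (f∘y)∘b`. -/
theorem stmt5 {A : Type*} (op : A → A → A)
    (hassoc : ∀ x y z, op (op x y) z = op x (op y z))
    (hidem : ∀ x, op x x = x)
    (hrnb : ∀ x y z, op (op x y) z = op (op y x) z)
    (a b : A) (hab : a ≠ op a b)
    (F : Set A) (hsep : IsSepFilter op a b F)
    (hmax : ∀ G : Set A, IsSepFilter op a b G → F ⊆ G → F = G)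
    (y : A) (hy : y ∉ F) :
    ∃ f ∈ F, op (op f y) a = op (op f y) b := by
  obtain ⟨⟨hne, hmul, hup⟩, haF, hnosep⟩ := hsep
  have hswap : ∀ x u v, op x (op u v) = op u (op x v) := by
    intro x u v
    rw [← hassoc, hrnb, hassoc]
  -- G : filter generated by F ∪ {y}
  set G : Set A := {z | ∃ f ∈ F, op z (op f y) = op f y} with hG
  have hFG : F ⊆ G := by
    intro g hg
    exact ⟨g, hg, by rw [← hassoc, hidem]⟩
  have hyG : y ∈ G := by
    obtain ⟨f, hf⟩ := hne
    exact ⟨f, hf, by rw [hswap, hidem]⟩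
  -- G is a filter
  have hGfilter : IsRNBFilter op G := by
    refine ⟨⟨y, hyG⟩, ?_, ?_⟩
    · rintro z ⟨f, hf, hz⟩ w ⟨g, hg, hw⟩
      refine ⟨op f g, hmul f hf g hg, ?_⟩
      have key : op z (op f (op g y)) = op f (op g y) := by
        rw [hswap f g y, hswap z g, hz]
      rw [hassoc f g y, hassoc, hswap w f, hw, key]
    · rintro z ⟨f, hf, hz⟩ w hwz
      refine ⟨f, hf, ?_⟩
      rw [← hz, ← hassoc, hwz, hz]
  -- G is not separating (otherwise F = G, but y ∈ G \ F)
  have hGnotsep : ¬ IsSepFilter op a b G := by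
    intro hGsep
    exact hy ((hmax G hGsep hFG) ▸ hyG)
  -- so the separation condition fails: some e ∈ G collapses a and b
  have : ∃ e ∈ G, op e a = op e b := by
    by_contra h
    push_neg at h
    exact hGnotsep ⟨hGfilter, hFG haF, h⟩
  obtain ⟨e, ⟨f, hf, hef⟩, hea⟩ := this
  refine ⟨f, hf, ?_⟩
  calc op (op f y) a = op (op e (op f y)) a := by rw [hef]
    _ = op (op (op f y) e) a := (hrnb _ _ _).symm
    _ = op (op f y) (op e a) := hassoc _ _ _
    _ = op (op f y) (op e b) := by rw [hea]
    _ = op (op (op f y) e) b := (hassoc _ _ _).symm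
    _ = op (op e (op f y)) b := hrnb _ _ _
    _ = op (op f y) b := by rw [hef]
end

section
/- Let (A,∘,∩) be a right normal band with intersection, let F be a filter of (A,∘), and let x,y ∈ A. Then x ∈ F, y ∈ F and (x,y) ∈ ε_F hold simultaneously if and only if x∩y ∈ F. -/
/-- `(A, op, cap)` is a right normal band with intersection: `op` is a right
normal band operation, `cap` is a semilattice operation, and the laws
`(x∩y)∘x = x∩y` and `x∘(y∩z) = (x∘y)∩z` hold. -/
def IsRNBInt {A : Type*} (op cap : A → A → A) : Prop :=
  (∀ x y z, op (op x y) z = op x (op y z)) ∧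
  (∀ x, op x x = x) ∧
  (∀ x y z, op (op x y) z = op (op y x) z) ∧
  (∀ x y z, cap (cap x y) z = cap x (cap y z)) ∧
  (∀ x y, cap x y = cap y x) ∧
  (∀ x, cap x x = x) ∧
  (∀ x y, op (cap x y) x = cap x y) ∧
  (∀ x y z, op x (cap y z) = cap (op x y) z)

/-- In a right normal band with intersection, for a filter `F` and `x, y ∈ A`:
`x ∈ F`, `y ∈ F` and `(x,y) ∈ ε_F` hold simultaneously iff `x∩y ∈ F`, where
`(x,y) ∈ ε_F` iff `op e x = op e y` for some `e ∈ F`. -/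
theorem stmt7 {A : Type*} (op cap : A → A → A) (h : IsRNBInt op cap)
    (F : Set A) (hF : IsRNBFilter op F) :
    ∀ x y : A, (x ∈ F ∧ y ∈ F ∧ ∃ e ∈ F, op e x = op e y) ↔ cap x y ∈ F := by
  obtain ⟨hassoc, hidem, hrn, hcassoc, hccomm, hcidem, h7, h8⟩ := h
  obtain ⟨-, hclosed, hup⟩ := hF
  intro x y
  constructor
  · rintro ⟨hx, hy, e, he, hexy⟩
    have h1 : op e (cap x y) = op e y := by
      rw [h8, hexy, ← h8, hcidem]
    have key : op (cap x y) (op e y) = op e y := by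
      calc op (cap x y) (op e y) = op (cap x y) (op e (cap x y)) := by rw [h1]
        _ = op (op (cap x y) e) (cap x y) := (hassoc _ _ _).symm
        _ = op (op e (cap x y)) (cap x y) := hrn _ _ _
        _ = op e (op (cap x y) (cap x y)) := hassoc _ _ _
        _ = op e (cap x y) := by rw [hidem]
        _ = op e y := h1
    exact hup _ (hclosed e he y hy) _ key
  · intro hxy
    refine ⟨hup _ hxy x (by rw [h8, hidem]),
      hup _ hxy y (by rw [hccomm x y, h8, hidem]),
      cap x y, hxy, ?_⟩
    rw [h7, hccomm x y, h7, hccomm]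
end

section
/- In any minus-algebra (A,−) the following quasiequational law holds: for all x,z,s,t ∈ A, if (z−x)∘s = (z−x)∘t and x∘s = x∘t, then z∘s = z∘t. -/
/-- `(A, op, sub, z)` is a minus-algebra: `op` is the (definable) domain
restriction, `sub` is minus, and `z` is the constant `0`. -/
def IsMinusAlg {A : Type*} (op sub : A → A → A) (z : A) : Prop :=
  (∀ x y, op x y = sub y (sub y x)) ∧
  (∀ x y w, op (op x y) w = op x (op y w)) ∧
  (∀ x, op x x = x) ∧
  (∀ x y w, op (op x y) w = op (op y x) w) ∧
  (∀ x, sub x x = z) ∧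
  (∀ x, op x z = z) ∧
  (∀ x, op z x = z) ∧
  (∀ x y, op (sub x y) x = sub x y) ∧
  (∀ x y, op (sub x y) y = z) ∧
  (∀ x y w, op (sub x y) w = sub (op x w) y) ∧
  (∀ s t x, sub s x = sub t x → op x s = op x t → s = t)

/-- In any minus-algebra the quasiequational law holds: if
`(z−x)∘s = (z−x)∘t` and `x∘s = x∘t` then `z∘s = z∘t`. -/
theorem stmt8 {A : Type*} (op sub : A → A → A) (zero : A)
    (h : IsMinusAlg op sub zero) :
    ∀ x z s t : A,
      op (sub z x) s = op (sub z x) t → op x s = op x t → op z s = op z t := by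
  obtain ⟨-, hassoc, -, hrn, -, -, -, -, -, hsubop, hcancel⟩ := h
  intro x z s t h1 h2
  apply hcancel _ _ x
  · rw [← hsubop, ← hsubop, h1]
  · rw [← hassoc, ← hassoc, hrn, hassoc, h2, ← hassoc, hrn]
end

section
/- Let (A,−) be a minus-algebra, let a,b ∈ A with a ≰ b (that is, a ≠ a∘b), and let F be a maximally (a,b)-separating filter of A (viewed as a right normal band under ∘). Then F is prime: whenever x ∈ F, for every y ∈ A either y ∈ F or x−y ∈ F. -/
/-- In a minus-algebra, if `a ≰ b` (i.e. `a ≠ a∘b`) and `F` is a maximally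
`(a,b)`-separating filter, then `F` is prime: whenever `x ∈ F`, for every
`y` either `y ∈ F` or `x−y ∈ F`. -/
theorem stmt9 {A : Type*} (op sub : A → A → A) (zero : A)
    (h : IsMinusAlg op sub zero)
    (a b : A) (hab : a ≠ op a b)
    (F : Set A) (hsep : IsSepFilter op a b F)
    (hmax : ∀ G : Set A, IsSepFilter op a b G → F ⊆ G → F = G) :
    ∀ x ∈ F, ∀ y : A, y ∈ F ∨ sub x y ∈ F := by
  obtain ⟨-, h2, h3, h4, -, -, -, -, -, h10, h11⟩ := h
  obtain ⟨⟨-, hcl, -⟩, haF, hsepF⟩ := hsep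
  intro x hx y
  by_contra hcon
  push_neg at hcon
  obtain ⟨hy, hxy⟩ := hcon
  have key : ∀ c, c ∉ F → ∃ f ∈ F, op (op f c) a = op (op f c) b := by
    intro c hc
    set G : Set A := {z | ∃ f ∈ F, op z (op f c) = op f c} with hGdef
    by_cases hmem : ∃ e ∈ G, op e a = op e b
    · obtain ⟨e, ⟨f, hf, hef⟩, heab⟩ := hmem
      refine ⟨f, hf, ?_⟩
      calc op (op f c) a = op (op e (op f c)) a := by rw [hef]
        _ = op (op (op f c) e) a := h4 e (op f c) a
        _ = op (op f c) (op e a) := h2 (op f c) e a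
        _ = op (op f c) (op e b) := by rw [heab]
        _ = op (op (op f c) e) b := (h2 (op f c) e b).symm
        _ = op (op e (op f c)) b := (h4 e (op f c) b).symm
        _ = op (op f c) b := by rw [hef]
    · exfalso
      push_neg at hmem
      have hFG : F ⊆ G := fun f hf => ⟨f, hf, by rw [← h2, h3]⟩
      have hcG : c ∈ G := ⟨a, haF, by
        calc op c (op a c) = op (op c a) c := (h2 c a c).symm
          _ = op (op a c) c := h4 c a c
          _ = op a (op c c) := h2 a c c
          _ = op a c := by rw [h3 c]⟩
      have hGfil : IsRNBFilter op G := by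
        refine ⟨⟨c, hcG⟩, ?_, ?_⟩
        · rintro z ⟨f, hf, hz⟩ v ⟨g, hg, hv⟩
          refine ⟨op f g, hcl f hf g hg, ?_⟩
          calc op (op z v) (op (op f g) c)
              = op z (op v (op (op f g) c)) := h2 z v _
            _ = op z (op v (op f (op g c))) := by rw [h2 f g c]
            _ = op z (op (op v f) (op g c)) := by rw [h2 v f (op g c)]
            _ = op z (op (op f v) (op g c)) := by rw [h4 v f (op g c)]
            _ = op z (op f (op v (op g c))) := by rw [h2 f v (op g c)]
            _ = op z (op f (op g c)) := by rw [hv]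
            _ = op z (op (op f g) c) := by rw [h2 f g c]
            _ = op z (op (op g f) c) := by rw [h4 f g c]
            _ = op (op z g) (op f c) := by rw [h2 g f c, ← h2 z g (op f c)]
            _ = op (op g z) (op f c) := by rw [h4 z g (op f c)]
            _ = op g (op z (op f c)) := h2 g z (op f c)
            _ = op g (op f c) := by rw [hz]
            _ = op (op g f) c := (h2 g f c).symm
            _ = op (op f g) c := h4 g f c
        · rintro z ⟨f, hf, hz⟩ v hvz
          refine ⟨f, hf, ?_⟩
          calc op v (op f c) = op v (op z (op f c)) := by rw [hz]
            _ = op (op v z) (op f c) := (h2 v z (op f c)).symm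
            _ = op z (op f c) := by rw [hvz]
            _ = op f c := hz
      have hGsep : IsSepFilter op a b G := ⟨hGfil, hFG haF, hmem⟩
      rw [hmax G hGsep hFG] at hc
      exact hc hcG
  obtain ⟨f, hf, Hf⟩ := key y hy
  obtain ⟨g, hg, Hg⟩ := key (sub x y) hxy
  set w := op f g with hw
  have hwF : w ∈ F := hcl f hf g hg
  set u := op w x with hu
  have huF : u ∈ F := hcl w hwF x hx
  have H1 : op (op w y) a = op (op w y) b := by
    calc op (op w y) a = op (op (op f g) y) a := by rw [hw]
      _ = op (op (op g f) y) a := by rw [h4 f g y]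
      _ = op (op g (op f y)) a := by rw [h2 g f y]
      _ = op g (op (op f y) a) := h2 g (op f y) a
      _ = op g (op (op f y) b) := by rw [Hf]
      _ = op (op g (op f y)) b := (h2 g (op f y) b).symm
      _ = op (op (op g f) y) b := by rw [h2 g f y]
      _ = op (op (op f g) y) b := by rw [h4 f g y]
      _ = op (op w y) b := by rw [hw]
  have H2 : op (op w (sub x y)) a = op (op w (sub x y)) b := by
    calc op (op w (sub x y)) a = op (op (op f g) (sub x y)) a := by rw [hw]
      _ = op (op f (op g (sub x y))) a := by rw [h2 f g (sub x y)]
      _ = op f (op (op g (sub x y)) a) := h2 f (op g (sub x y)) a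
      _ = op f (op (op g (sub x y)) b) := by rw [Hg]
      _ = op (op f (op g (sub x y))) b := (h2 f (op g (sub x y)) b).symm
      _ = op (op (op f g) (sub x y)) b := by rw [h2 f g (sub x y)]
      _ = op (op w (sub x y)) b := by rw [hw]
  have e1 : ∀ t, op (op w (sub x y)) t = sub (op u t) y := by
    intro t
    calc op (op w (sub x y)) t = op (op (sub x y) w) t := h4 w (sub x y) t
      _ = op (sub x y) (op w t) := h2 (sub x y) w t
      _ = sub (op x (op w t)) y := h10 x y (op w t)
      _ = sub (op (op x w) t) y := by rw [h2 x w t]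
      _ = sub (op (op w x) t) y := by rw [h4 x w t]
      _ = sub (op u t) y := by rw [hu]
  have key1 : sub (op u a) y = sub (op u b) y := by
    rw [← e1 a, ← e1 b, H2]
  have e2 : ∀ t, op y (op u t) = op x (op (op w y) t) := by
    intro t
    calc op y (op u t) = op (op y u) t := (h2 y u t).symm
      _ = op (op y (op w x)) t := by rw [hu]
      _ = op (op (op y w) x) t := by rw [h2 y w x]
      _ = op (op (op w y) x) t := by rw [h4 y w x]
      _ = op (op x (op w y)) t := h4 (op w y) x t
      _ = op x (op (op w y) t) := h2 x (op w y) t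
  have key2 : op y (op u a) = op y (op u b) := by
    rw [e2 a, e2 b, H1]
  exact hsepF u huF (h11 (op u a) (op u b) y key1 key2)
end

section
/- Let (A,−) be a minus-algebra. Then the set of all prime filters of A is separating: for all a,b ∈ A with a ≰ b (that is, a ≠ a∘b), there exists a prime filter F of A that is (a,b)-separating, i.e. a ∈ F and there is no e ∈ F with e∘a = e∘b. -/
section Stmt10Aux

variable {A : Type*} {op : A → A → A}

theorem rnb_lcomm (hA : ∀ x y w, op (op x y) w = op x (op y w))
    (hN : ∀ x y w, op (op x y) w = op (op y x) w) :
    ∀ x y w, op x (op y w) = op y (op x w) := fun x y w => by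
  rw [← hA, hN, hA]

theorem rnb_idem2 (hA : ∀ x y w, op (op x y) w = op x (op y w))
    (hI : ∀ x, op x x = x) : ∀ x y, op x (op x y) = op x y := fun x y => by
  rw [← hA, hI]

/-- The filter generated by a filter `F` and an element `c`. -/
theorem rnb_gen_filter (hA : ∀ x y w, op (op x y) w = op x (op y w))
    (hI : ∀ x, op x x = x)
    (hN : ∀ x y w, op (op x y) w = op (op y x) w)
    (F : Set A) (hF : IsRNBFilter op F) (c : A) :
    IsRNBFilter op {w | ∃ f ∈ F, op w (op f c) = op f c} ∧
      F ⊆ {w | ∃ f ∈ F, op w (op f c) = op f c} ∧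
      c ∈ {w | ∃ f ∈ F, op w (op f c) = op f c} := by
  obtain ⟨⟨f0, hf0⟩, hcl, hup⟩ := hF
  have lc := rnb_lcomm hA hN
  have i2 := rnb_idem2 hA hI
  have hFsub : F ⊆ {w | ∃ f ∈ F, op w (op f c) = op f c} := by
    intro f hf
    exact ⟨f, hf, by rw [← hA, hI]⟩
  have hcmem : op c (op f0 c) = op f0 c := by rw [← hA, hN, hA, hI]
  refine ⟨⟨⟨c, f0, hf0, hcmem⟩, ?_, ?_⟩, hFsub, f0, hf0, hcmem⟩
  · rintro z1 ⟨f1, hf1, hz1⟩ z2 ⟨f2, hf2, hz2⟩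
    refine ⟨op f1 f2, hcl f1 hf1 f2 hf2, ?_⟩
    calc op (op z1 z2) (op (op f1 f2) c)
        = op z2 (op f2 (op z1 (op f1 c))) := by simp [hA, lc]
      _ = op z2 (op f2 (op f1 c)) := by rw [hz1]
      _ = op f1 (op z2 (op f2 c)) := by simp [hA, lc]
      _ = op f1 (op f2 c) := by rw [hz2]
      _ = op (op f1 f2) c := (hA f1 f2 c).symm
  · rintro z ⟨f, hf, hz⟩ w hw
    refine ⟨f, hf, ?_⟩
    calc op w (op f c) = op w (op z (op f c)) := by rw [hz]
      _ = op (op w z) (op f c) := (hA w z (op f c)).symm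
      _ = op z (op f c) := by rw [hw]
      _ = op f c := hz

end Stmt10Aux

/-- In a minus-algebra, the set of prime filters is separating: for all
`a, b` with `a ≰ b` (i.e. `a ≠ a∘b`) there is a prime filter `F` (a filter
such that `x ∈ F` implies `y ∈ F` or `x−y ∈ F` for all `y`) that is
`(a,b)`-separating: `a ∈ F` and no `e ∈ F` satisfies `e∘a = e∘b`. -/
theorem stmt10 {A : Type*} (op sub : A → A → A) (zero : A)
    (h : IsMinusAlg op sub zero) :
    ∀ a b : A, a ≠ op a b →
      ∃ F : Set A, IsRNBFilter op F ∧
        (∀ x ∈ F, ∀ y : A, y ∈ F ∨ sub x y ∈ F) ∧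
        a ∈ F ∧ ∀ e ∈ F, op e a ≠ op e b := by
  obtain ⟨h1, hA, hI, hN, h5, h6, h7, h8, h9, h10, hQ⟩ := h
  have lc := rnb_lcomm hA hN
  have i2 := rnb_idem2 hA hI
  intro a b hab
  -- the principal filter of `a` is separating
  have hP0 : IsSepFilter op a b {x | op x a = a} := by
    refine ⟨⟨⟨a, hI a⟩, ?_, ?_⟩, hI a, ?_⟩
    · intro p hp q hq
      show op (op p q) a = a
      rw [hA, hq, hp]
    · intro p hp q hq
      show op q a = a
      rw [← hp, ← hA, hq, hp]
    · intro e he heq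
      apply hab
      rw [he] at heq
      calc a = op e b := heq
        _ = op e (op b b) := by rw [hI]
        _ = op (op e b) b := (hA e b b).symm
        _ = op a b := by rw [← heq]
  -- Zorn's lemma
  set S : Set (Set A) := {F | IsSepFilter op a b F} with hS
  have hzorn : ∀ c ⊆ S, IsChain (· ⊆ ·) c → c.Nonempty →
      ∃ ub ∈ S, ∀ s ∈ c, s ⊆ ub := by
    rintro c hcS hchain ⟨c0, hc0⟩
    refine ⟨⋃₀ c, ⟨⟨⟨a, c0, hc0, (hcS hc0).2.1⟩, ?_, ?_⟩, ⟨c0, hc0, (hcS hc0).2.1⟩, ?_⟩,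
      fun s hs => Set.subset_sUnion_of_mem hs⟩
    · rintro p ⟨Fp, hFp, hpFp⟩ q ⟨Fq, hFq, hqFq⟩
      rcases hchain.total hFp hFq with hle | hle
      · exact ⟨Fq, hFq, (hcS hFq).1.2.1 p (hle hpFp) q hqFq⟩
      · exact ⟨Fp, hFp, (hcS hFp).1.2.1 p hpFp q (hle hqFq)⟩
    · rintro p ⟨Fp, hFp, hpFp⟩ q hq
      exact ⟨Fp, hFp, (hcS hFp).1.2.2 p hpFp q hq⟩
    · rintro e ⟨Fe, hFe, heFe⟩
      exact (hcS hFe).2.2 e heFe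
  obtain ⟨F, -, hFS, hFmax⟩ := zorn_subset_nonempty S hzorn _ hP0
  obtain ⟨⟨hFne, hFcl, hFup⟩, haF, hFsep⟩ := hFS
  refine ⟨F, ⟨hFne, hFcl, hFup⟩, ?_, haF, hFsep⟩
  -- primality
  intro x hx y
  by_cases hy : y ∈ F
  · exact Or.inl hy
  right
  by_contra hxy
  -- key lemma: from a non-separating extension extract a witness in product form
  have key : ∀ c : A, c ∉ F → ∃ f ∈ F, op (op f c) a = op (op f c) b := by
    intro c hc
    have := rnb_gen_filter hA hI hN F ⟨hFne, hFcl, hFup⟩ c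
    obtain ⟨hGfil, hGsub, hcG⟩ := this
    set G := {w | ∃ f ∈ F, op w (op f c) = op f c} with hGdef
    have hGnotsep : ¬ IsSepFilter op a b G := by
      intro hsep
      have : G ⊆ F := hFmax hsep (fun p hp => hGsub hp)
      exact hc (this hcG)
    have : ∃ e ∈ G, op e a = op e b := by
      by_contra hcon
      push_neg at hcon
      exact hGnotsep ⟨hGfil, hGsub haF, hcon⟩
    obtain ⟨e, ⟨f, hf, hef⟩, heab⟩ := this
    refine ⟨f, hf, ?_⟩
    have e1 : op (op e (op f c)) a = op f (op c (op e a)) := by simp [hA, lc]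
    have e2 : op (op e (op f c)) b = op f (op c (op e b)) := by simp [hA, lc]
    rw [hef] at e1 e2
    rw [e1, e2, heab]
  obtain ⟨f1, hf1, hg1⟩ := key y hy
  obtain ⟨f2, hf2, hg2⟩ := key (sub x y) hxy
  set w := op f1 (op f2 x) with hwdef
  have hwF : w ∈ F := hFcl f1 hf1 (op f2 x) (hFcl f2 hf2 x hx)
  have hg1' : op f1 (op y a) = op f1 (op y b) := by
    rw [← hA, ← hA, hg1]
  have hg2' : op f2 (op (sub x y) a) = op f2 (op (sub x y) b) := by
    rw [← hA, ← hA, hg2]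
  -- op-side condition
  have hopside : op y (op w a) = op y (op w b) := by
    have c1 : op y (op w a) = op f2 (op x (op f1 (op y a))) := by
      rw [hwdef]; simp [hA, lc]
    have c2 : op y (op w b) = op f2 (op x (op f1 (op y b))) := by
      rw [hwdef]; simp [hA, lc]
    rw [c1, c2, hg1']
  -- sub-side condition
  have hwx : op x w = w := by rw [hwdef, lc x f1, lc x f2, hI]
  have d3 : sub w y = op (sub x y) w := by rw [h10, hwx]
  have hsubside : sub (op w a) y = sub (op w b) y := by
    have c1 : op (op (sub x y) w) a = op f1 (op x (op f2 (op (sub x y) a))) := by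
      rw [hwdef]; simp [hA, lc]
    have c2 : op (op (sub x y) w) b = op f1 (op x (op f2 (op (sub x y) b))) := by
      rw [hwdef]; simp [hA, lc]
    calc sub (op w a) y = op (sub w y) a := (h10 w y a).symm
      _ = op (op (sub x y) w) a := by rw [d3]
      _ = op f1 (op x (op f2 (op (sub x y) a))) := c1
      _ = op f1 (op x (op f2 (op (sub x y) b))) := by rw [hg2']
      _ = op (op (sub x y) w) b := c2.symm
      _ = op (sub w y) b := by rw [d3]
      _ = sub (op w b) y := h10 w y b
  exact hFsep w hwF (hQ (op w a) (op w b) y hsubside hopside)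
end

section
/- Let (A,−,⊔) be a minus-algebra with override. A filter F of the underlying minus-algebra (A,−) is prime (i.e. whenever x ∈ F, for every y ∈ A either y ∈ F or x−y ∈ F) if and only if for all a,b ∈ A: a⊔b ∈ F implies a ∈ F or b ∈ F. -/
/-- Let `(A, sub, ov)` be a minus-algebra with override, i.e. a minus-algebra
additionally satisfying `(x⊔y)−x = y−x` and `x∘(x⊔y) = x`.  A filter `F` of
the underlying minus-algebra is prime (whenever `x ∈ F`, for every `y` either
`y ∈ F` or `x−y ∈ F`) iff for all `a, b`: `a⊔b ∈ F` implies `a ∈ F` or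
`b ∈ F`. -/
theorem stmt11 {A : Type*} (op sub ov : A → A → A) (zero : A)
    (h : IsMinusAlg op sub zero)
    (hov1 : ∀ x y, sub (ov x y) x = sub y x)
    (hov2 : ∀ x y, op x (ov x y) = x)
    (F : Set A) (hF : IsRNBFilter op F) :
    (∀ x ∈ F, ∀ y : A, y ∈ F ∨ sub x y ∈ F) ↔
      (∀ a b : A, ov a b ∈ F → a ∈ F ∨ b ∈ F) := by
  obtain ⟨h1, h2, h3, h4, h5, h6, h7, h8, h9, h10, h11⟩ := h
  obtain ⟨-, -, hup⟩ := hF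
  -- sub zero w = zero
  have Z : ∀ w, sub zero w = zero := by
    intro w
    have e := h10 zero w w
    rw [h7, h9] at e
    exact e.symm
  -- op y (sub x y) = zero
  have L1 : ∀ x y, op y (sub x y) = zero := by
    intro x y
    set t := sub x y with ht
    apply h11 _ _ t
    · have e := h10 y t t
      rw [h9] at e
      rw [← e, Z]
    · have e := (h2 t y t).symm
      rw [ht, h9, h7] at e
      rw [e, h6]
  -- sub (sub x y) y = sub x y
  have L2 : ∀ x y, sub (sub x y) y = sub x y := by
    intro x y
    set t := sub x y with ht
    set w := sub t y with hw
    have e1 : sub t w = zero := by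
      have e := h1 y t
      rw [L1 x y] at e
      exact e.symm
    refine (h11 t w w ?_ ?_).symm
    · rw [e1, h5]
    · rw [h3, hw, ht, h8]
  constructor
  · intro hp a b hab
    rcases hp (ov a b) hab a with ha | hs
    · exact Or.inl ha
    · rw [hov1] at hs
      refine Or.inr (hup _ hs b ?_)
      calc op b (sub b a) = op b (op (sub b a) b) := by rw [h8]
        _ = op (op b (sub b a)) b := (h2 _ _ _).symm
        _ = op (op (sub b a) b) b := h4 _ _ _
        _ = op (sub b a) (op b b) := h2 _ _ _
        _ = op (sub b a) b := by rw [h3]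
        _ = sub b a := h8 _ _
  · intro hyp x hx y
    set s := sub x y with hs
    set u := ov y s with hu
    have key : op u x = x := by
      apply h11 _ _ y
      · have e := h10 u y x
        rw [hu, hov1, hs, L2] at e
        rw [← e, h8]
      · rw [← h2, hu, hov2]
    exact hyp y s (hup x hx u key)
end

section
/- Let (A,∘,∩,⋄) be a right normal band with intersection and update, let a,b ∈ A with a ≰ b (that is, a ≠ a∘b), and let F be a maximally (a,b)-separating filter in (A,∘). Then F is weakly prime: whenever x ∈ F, for every y ∈ A either y ∈ F or x∩(x⋄y) ∈ F. -/
/-- Let `(A, op, cap, dia)` be a right normal band with intersection and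
update, let `a ≰ b` (i.e. `a ≠ a∘b`), and let `F` be a maximally
`(a,b)`-separating filter.  Then `F` is weakly prime: whenever `x ∈ F`, for
every `y` either `y ∈ F` or `x∩(x⋄y) ∈ F`. -/
theorem stmt12 {A : Type*} (op cap dia : A → A → A)
    (h : IsRNBInt op cap)
    (hd1 : ∀ s t, op (dia s t) s = s)
    (hd2 : ∀ s t, dia s (dia s t) = dia s t)
    (hd3 : ∀ s t, op t (dia s t) = op s t)
    (hd4 : ∀ x y a b, op (cap x (dia x y)) a = op (cap x (dia x y)) b →
      op y a = op y b → op x a = op x b)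
    (a b : A) (hab : a ≠ op a b)
    (F : Set A) (hsep : IsSepFilter op a b F)
    (hmax : ∀ G : Set A, IsSepFilter op a b G → F ⊆ G → F = G) :
    ∀ x ∈ F, ∀ y : A, y ∈ F ∨ cap x (dia x y) ∈ F := by

  obtain ⟨ha, hi, hln, -, -, -, -, -⟩ := h
  obtain ⟨⟨hFne, hFop, hFup⟩, haF, hFsep⟩ := hsep
  -- swap lemma: non-final factors commute
  have L1 : ∀ w e c, op w (op e c) = op e (op w c) := by
    intro w e c
    rw [← ha, hln, ha]
  -- key: if t ∉ F then some e ∈ F collapses a,b after t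
  have key : ∀ t, t ∉ F → ∃ e ∈ F, op (op e t) a = op (op e t) b := by
    intro t ht
    by_contra hcon
    push_neg at hcon
    set H : Set A := {w | ∃ e ∈ F, op w (op e t) = op e t} with hH
    have hFH : F ⊆ H := by
      intro f hf
      exact ⟨f, hf, by rw [← ha, hi]⟩
    have hfix : ∀ w e, op w (op e t) = op e t →
        ∀ e', op w (op e' (op e t)) = op e' (op e t) := by
      intro w e hw e'
      rw [L1 w e', hw]
    have hHsep : IsSepFilter op a b H := by
      refine ⟨⟨⟨a, hFH haF⟩, ?_, ?_⟩, hFH haF, ?_⟩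
      · rintro w1 ⟨e1, he1, hw1⟩ w2 ⟨e2, he2, hw2⟩
        refine ⟨op e1 e2, hFop e1 he1 e2 he2, ?_⟩
        rw [ha e1 e2 t, ha w1 w2, hfix w2 e2 hw2 e1, L1 e1 e2 t,
          hfix w1 e1 hw1 e2, L1 e2 e1 t]
      · rintro w ⟨e, he, hw⟩ w' hw'
        refine ⟨e, he, ?_⟩
        rw [← hw, ← ha, hw', hw]
      · rintro g ⟨e, he, hg⟩ hgab
        apply hcon e he
        calc op (op e t) a = op (op g (op e t)) a := by rw [hg]
          _ = op (op (op e t) g) a := by rw [hln]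
          _ = op (op e t) (op g a) := by rw [ha]
          _ = op (op e t) (op g b) := by rw [hgab]
          _ = op (op (op e t) g) b := (ha _ _ _).symm
          _ = op (op g (op e t)) b := hln _ _ _
          _ = op (op e t) b := by rw [hg]
    have hFeq := hmax H hHsep hFH
    have htH : t ∈ H := ⟨a, haF, by rw [L1, hi]⟩
    rw [hFeq] at ht
    exact ht htH
  intro x hx y
  by_cases hy : y ∈ F
  · exact Or.inl hy
  right
  by_contra hz
  set z := cap x (dia x y) with hzdef
  obtain ⟨e', he', hey⟩ := key y hy
  obtain ⟨e, he, hez⟩ := key z hz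
  rw [ha, ha] at hey hez
  set f := op e e' with hf
  have hfF : f ∈ F := hFop e he e' he'
  have hza : op z (op f a) = op z (op f b) := by
    rw [L1 z f a, L1 z f b, hf, ha, ha, L1 e e', L1 e e' (op z b), hez]
  have hya : op y (op f a) = op y (op f b) := by
    rw [L1 y f a, L1 y f b, hf, ha, ha, hey]
  have hxa := hd4 x y (op f a) (op f b) hza hya
  apply hFsep (op f x) (hFop f hfF x hx)
  rw [ha, ha, ← L1, ← L1, ← ha, ← ha, hln, ha, hxa, ← ha, hln, ha, L1, ← ha]
end

section
/- Let (A,∘,∩,⊔) be a right normal band with intersection and override, let a,b ∈ A with a ≰ b (that is, a ≠ a∘b), and let F be a maximally (a,b)-separating filter of A. Then F is prime: for all s,t ∈ A, if s⊔t ∈ F then s ∈ F or t ∈ F. -/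
/-- If `F` is maximally `(a,b)`-separating and `s ∉ F`, then the filter
generated by `F` and `s` fails to separate: some `e ∈ F` has
`(e∘s)∘a = (e∘s)∘b`. -/
theorem sep_ext {A : Type*} (op : A → A → A)
    (hassoc : ∀ x y z, op (op x y) z = op x (op y z))
    (hidem : ∀ x, op x x = x)
    (hrn : ∀ x y z, op (op x y) z = op (op y x) z)
    (a b : A)
    (F : Set A) (hsep : IsSepFilter op a b F)
    (hmax : ∀ G : Set A, IsSepFilter op a b G → F ⊆ G → F = G)
    (s : A) (hs : s ∉ F) :
    ∃ e ∈ F, op (op e s) a = op (op e s) b := by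
  obtain ⟨⟨⟨w, hw⟩, hcl, hup⟩, haF, hFsep⟩ := hsep
  set G : Set A := {x | ∃ e ∈ F, op x (op e s) = op e s} with hG
  have hFG : F ⊆ G := fun x hx => ⟨x, hx, by rw [← hassoc x x s, hidem x]⟩
  have hsG : s ∈ G :=
    ⟨w, hw, by rw [← hassoc s w s, hrn s w s, hassoc w s s, hidem s]⟩
  have hGfilter : IsRNBFilter op G := by
    refine ⟨⟨w, hFG hw⟩, ?_, ?_⟩
    · rintro x ⟨e, heF, hx⟩ y ⟨f, hfF, hy⟩
      refine ⟨op e f, hcl e heF f hfF, ?_⟩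
      calc op (op x y) (op (op e f) s)
          = op x (op y (op e (op f s))) := by
            rw [hassoc e f s, hassoc x y (op e (op f s))]
        _ = op x (op (op y e) (op f s)) := by rw [hassoc y e (op f s)]
        _ = op x (op (op e y) (op f s)) := by rw [hrn y e (op f s)]
        _ = op x (op e (op y (op f s))) := by rw [hassoc e y (op f s)]
        _ = op x (op e (op f s)) := by rw [hy]
        _ = op x (op (op f e) s) := by rw [hrn f e s, hassoc e f s]
        _ = op x (op f (op e s)) := by rw [hassoc f e s]
        _ = op (op x f) (op e s) := by rw [hassoc x f (op e s)]
        _ = op (op f x) (op e s) := by rw [hrn x f (op e s)]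
        _ = op f (op x (op e s)) := by rw [hassoc f x (op e s)]
        _ = op f (op e s) := by rw [hx]
        _ = op (op e f) s := by rw [hrn e f s, hassoc f e s]
    · rintro x ⟨e, heF, hx⟩ z hz
      exact ⟨e, heF, by rw [← hx, ← hassoc z x (op e s), hz]⟩
  by_contra hne
  push_neg at hne
  have hGsep : IsSepFilter op a b G := by
    refine ⟨hGfilter, hFG haF, ?_⟩
    rintro x ⟨e, heF, hx⟩ hxab
    refine hne e heF ?_
    calc op (op e s) a = op (op x (op e s)) a := by rw [hx]
      _ = op (op (op e s) x) a := by rw [hrn x (op e s) a]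
      _ = op (op e s) (op x a) := by rw [hassoc (op e s) x a]
      _ = op (op e s) (op x b) := by rw [hxab]
      _ = op (op (op e s) x) b := by rw [hassoc (op e s) x b]
      _ = op (op x (op e s)) b := by rw [hrn x (op e s) b]
      _ = op (op e s) b := by rw [hx]
  rw [hmax G hGsep hFG] at hs
  exact hs hsG

/-- Let `(A, op, cap, ov)` be a right normal band with intersection and
override, let `a ≰ b` (i.e. `a ≠ a∘b`), and let `F` be a maximally
`(a,b)`-separating filter of `A`.  Then `F` is prime: for all `s, t`, if
`s⊔t ∈ F` then `s ∈ F` or `t ∈ F`. -/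
theorem stmt13 {A : Type*} (op cap ov : A → A → A)
    (h : IsRNBInt op cap)
    (ho1 : ∀ s t, op s (ov s t) = s)
    (ho2 : ∀ s t, ov (cap (ov s t) t) s = ov s t)
    (ho3 : ∀ s t u, op (ov s t) u = ov (op s u) (op t u))
    (a b : A) (hab : a ≠ op a b)
    (F : Set A) (hsep : IsSepFilter op a b F)
    (hmax : ∀ G : Set A, IsSepFilter op a b G → F ⊆ G → F = G) :
    ∀ s t : A, ov s t ∈ F → s ∈ F ∨ t ∈ F := by
  obtain ⟨hassoc, hidem, hrn, hcapa, hcapc, hcapi, hcap1, hcap2⟩ := h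
  intro s t hst
  by_contra hcon
  push_neg at hcon
  obtain ⟨hs, ht⟩ := hcon
  obtain ⟨e, heF, he⟩ := sep_ext op hassoc hidem hrn a b F hsep hmax s hs
  obtain ⟨f, hfF, hf⟩ := sep_ext op hassoc hidem hrn a b F hsep hmax t ht
  obtain ⟨⟨hne, hcl, hup⟩, haF, hFsep⟩ := hsep
  set u := ov s t with hu
  set p := cap u t with hp
  set k := op e f with hk
  have hkF : k ∈ F := hcl e heF f hfF
  have hpt : op p t = p := by rw [hp, hcapc u t]; exact hcap1 t u
  have hups : ov p s = u := by rw [hp, hu]; exact ho2 s t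
  -- (k∘s)∘a = (k∘s)∘b
  have hks : op (op k s) a = op (op k s) b := by
    calc op (op (op e f) s) a
        = op (op (op f e) s) a := by rw [hrn e f s]
      _ = op f (op (op e s) a) := by rw [hassoc f e s, hassoc f (op e s) a]
      _ = op f (op (op e s) b) := by rw [he]
      _ = op (op (op f e) s) b := by rw [hassoc f e s, hassoc f (op e s) b]
      _ = op (op (op e f) s) b := by rw [hrn e f s]
  -- (k∘p)∘a = (k∘p)∘b
  have hkey : ∀ c, op (op k p) c = op p (op e (op (op f t) c)) := by
    intro c
    calc op (op k p) c
        = op k (op p c) := by rw [hassoc k p c]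
      _ = op k (op (op p t) c) := by rw [hpt]
      _ = op k (op p (op t c)) := by rw [hassoc p t c]
      _ = op (op k p) (op t c) := by rw [hassoc k p (op t c)]
      _ = op (op p k) (op t c) := by rw [hrn k p (op t c)]
      _ = op p (op k (op t c)) := by rw [hassoc p k (op t c)]
      _ = op p (op e (op f (op t c))) := by rw [hk, hassoc e f (op t c)]
      _ = op p (op e (op (op f t) c)) := by rw [hassoc f t c]
  have hkp : op (op k p) a = op (op k p) b := by
    rw [hkey a, hkey b, hf]
  -- conclude
  have hfin : ∀ c, op (op u k) c = ov (op (op k p) c) (op (op k s) c) := by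
    intro c
    calc op (op u k) c
        = op u (op k c) := by rw [hassoc u k c]
      _ = op (ov p s) (op k c) := by rw [hups]
      _ = ov (op p (op k c)) (op s (op k c)) := ho3 p s (op k c)
      _ = ov (op (op p k) c) (op (op s k) c) := by
          rw [hassoc p k c, hassoc s k c]
      _ = ov (op (op k p) c) (op (op k s) c) := by
          rw [hrn p k c, hrn s k c]
  have : op (op u k) a = op (op u k) b := by rw [hfin a, hfin b, hkp, hks]
  exact hFsep (op u k) (hcl u hst k hkF) this
end

section
/- Let (A,∘) be a right normal band in which every two elements s,t have a greatest lower bound s∧t under the natural order ≤ (where a ≤ b iff a = a∘b). Then (A,∘,∧) is a right normal band with intersection. Conversely, if (A,∘,∩) is a right normal band with intersection, then for all x,y ∈ A the element x∩y is the greatest lower bound of x and y under the natural order ≤. -/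
/-- In a right normal band `(A, op)` (with natural order `a ≤ b` iff
`a = op a b`): (1) if `wedge` gives a greatest lower bound for every pair
under the natural order, then `(A, op, wedge)` is a right normal band with
intersection; (2) conversely, in any right normal band with intersection
`(A, op, cap)`, `cap x y` is the greatest lower bound of `x` and `y` under
the natural order. -/
theorem stmt15 {A : Type*} (op : A → A → A)
    (hassoc : ∀ x y z, op (op x y) z = op x (op y z))
    (hidem : ∀ x, op x x = x)
    (hrnb : ∀ x y z, op (op x y) z = op (op y x) z) :
    (∀ wedge : A → A → A,
      (∀ s t : A,
        wedge s t = op (wedge s t) s ∧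
        wedge s t = op (wedge s t) t ∧
        ∀ u : A, u = op u s → u = op u t → u = op u (wedge s t)) →
      IsRNBInt op wedge) ∧
    (∀ cap : A → A → A, IsRNBInt op cap →
      ∀ x y : A,
        cap x y = op (cap x y) x ∧
        cap x y = op (cap x y) y ∧
        ∀ u : A, u = op u x → u = op u y → u = op u (cap x y)) := by
  -- general facts about the natural order `a ≤ b ↔ a = op a b`
  have trans : ∀ a b c : A, a = op a b → b = op b c → a = op a c := by
    intro a b c hab hbc
    calc a = op a b := hab
    _ = op (op a b) c := by rw [hassoc, ← hbc]
    _ = op a c := by rw [← hab]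
  have antisym : ∀ a b : A, a = op a b → b = op b a → a = b := by
    intro a b hab hba
    calc a = op a b := hab
    _ = op a (op b a) := by rw [← hba]
    _ = op (op a b) a := by rw [hassoc]
    _ = op (op b a) a := by rw [hrnb]
    _ = op b (op a a) := by rw [hassoc]
    _ = op b a := by rw [hidem]
    _ = b := hba.symm
  -- u ≤ x∘y → x∘u = u
  have habsorb : ∀ x y u : A, u = op u (op x y) → op x u = u := by
    intro x y u hu
    calc op x u = op x (op u (op x y)) := by rw [← hu]
    _ = op (op x u) (op x y) := by rw [hassoc]
    _ = op (op u x) (op x y) := by rw [hrnb]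
    _ = op u (op (op x x) y) := by rw [hassoc, ← hassoc x x y]
    _ = op u (op x y) := by rw [hidem]
    _ = u := hu.symm
  -- u ≤ x∘y → u ≤ y
  have hle2 : ∀ x y u : A, u = op u (op x y) → u = op u y := by
    intro x y u hu
    have h : op u y = u := by
      calc op u y = op (op u (op x y)) y := by rw [← hu]
      _ = op u (op (op x y) y) := hassoc u (op x y) y
      _ = op u (op x (op y y)) := by rw [hassoc x y y]
      _ = op u (op x y) := by rw [hidem]
      _ = u := hu.symm
    exact h.symm
  -- w ≤ y → x∘w ≤ x∘y
  have hmono : ∀ x y w : A, w = op w y → op x w = op (op x w) (op x y) := by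
    intro x y w hw
    have h1 : op w (op x y) = op x w := by
      calc op w (op x y) = op (op w x) y := (hassoc w x y).symm
      _ = op (op x w) y := by rw [hrnb]
      _ = op x (op w y) := by rw [hassoc]
      _ = op x w := by rw [← hw]
    calc op x w = op (op x x) w := by rw [hidem]
    _ = op x (op x w) := by rw [hassoc]
    _ = op x (op w (op x y)) := by rw [h1]
    _ = op (op x w) (op x y) := by rw [hassoc]
  constructor
  · intro wedge hglb
    refine ⟨hassoc, hidem, hrnb, ?_, ?_, ?_, ?_, ?_⟩
    · -- associativity of wedge
      intro x y z
      have L1 : wedge (wedge x y) z = op (wedge (wedge x y) z) (wedge x y) :=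
        (hglb (wedge x y) z).1
      have L2 : wedge (wedge x y) z = op (wedge (wedge x y) z) z :=
        (hglb (wedge x y) z).2.1
      have Lx := trans _ _ _ L1 (hglb x y).1
      have Ly := trans _ _ _ L1 (hglb x y).2.1
      have Lyz := (hglb y z).2.2 _ Ly L2
      have hLR := (hglb x (wedge y z)).2.2 _ Lx Lyz
      have R1 : wedge x (wedge y z) = op (wedge x (wedge y z)) x :=
        (hglb x (wedge y z)).1
      have R2 : wedge x (wedge y z) = op (wedge x (wedge y z)) (wedge y z) :=
        (hglb x (wedge y z)).2.1
      have Ry := trans _ _ _ R2 (hglb y z).1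
      have Rz := trans _ _ _ R2 (hglb y z).2.1
      have Rxy := (hglb x y).2.2 _ R1 Ry
      have hRL := (hglb (wedge x y) z).2.2 _ Rxy Rz
      exact antisym _ _ hLR hRL
    · -- commutativity
      intro x y
      exact antisym _ _
        ((hglb y x).2.2 _ (hglb x y).2.1 (hglb x y).1)
        ((hglb x y).2.2 _ (hglb y x).2.1 (hglb y x).1)
    · -- idempotence
      intro x
      exact antisym _ _
        (hglb x x).1
        ((hglb x x).2.2 x (hidem x).symm (hidem x).symm)
    · intro x y
      exact ((hglb x y).1).symm
    · -- op x (wedge y z) = wedge (op x y) z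
      intro x y z
      set w := wedge y z with hw
      have A1 : w = op w y := (hglb y z).1
      have A2 : w = op w z := (hglb y z).2.1
      -- x∘w is a lower bound of x∘y and z
      have lb1 : op x w = op (op x w) (op x y) := hmono x y w A1
      have lb2 : op x w = op (op x w) z := by
        calc op x w = op x (op w z) := by rw [← A2]
        _ = op (op x w) z := by rw [hassoc]
      set c := wedge (op x y) z with hc
      have c1 : c = op c (op x y) := (hglb (op x y) z).1
      have c2 : c = op c z := (hglb (op x y) z).2.1
      have cy : c = op c y := hle2 x y c c1
      have cw : c = op c w := (hglb y z).2.2 _ cy c2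
      have cxw : c = op c (op x w) := by
        have : op c (op x w) = c := by
          calc op c (op x w) = op (op c x) w := (hassoc c x w).symm
          _ = op (op x c) w := by rw [hrnb]
          _ = op x (op c w) := by rw [hassoc]
          _ = op x c := by rw [← cw]
          _ = c := habsorb x y c c1
        exact this.symm
      have hxwc : op x w = op (op x w) c := (hglb (op x y) z).2.2 _ lb1 lb2
      exact antisym _ _ hxwc cxw
  · intro cap hint x y
    obtain ⟨_, _, _, _, hcomm, hcidem, hlaw7, hlaw8⟩ := hint
    refine ⟨(hlaw7 x y).symm, ?_, ?_⟩
    · calc cap x y = cap y x := hcomm x y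
      _ = op (cap y x) y := (hlaw7 y x).symm
      _ = op (cap x y) y := by rw [← hcomm]
    · intro u hux huy
      have h1 : u = cap u y := by
        calc u = op u y := huy
        _ = op u (cap y y) := by rw [hcidem]
        _ = cap (op u y) y := hlaw8 u y y
        _ = cap u y := by rw [← huy]
      calc u = cap u y := h1
      _ = cap (op u x) y := by rw [← hux]
      _ = op u (cap x y) := (hlaw8 u x y).symm
end

section
/- (Vagner's representation theorem.) Every right normal band is isomorphic to a right normal band of partial functions under domain restriction: for every right normal band (A,∘) there exist sets X and Y and an injective map Φ from A into the partial functions from X to Y such that for all a,b ∈ A, Φ(a∘b) equals the restriction of Φ(b) to the domain of Φ(a), i.e. Φ(a∘b)(x) = Φ(b)(x) when x ∈ dom(Φ(a)) and Φ(a∘b)(x) is undefined otherwise. -/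
universe u

/-- Vagner's representation theorem: every right normal band `(A, op)` is
isomorphic to a right normal band of partial functions under domain
restriction.  There are sets `X`, `Y` and an injective `Φ : A → (X →. Y)`
such that `Φ (op a b)` is the restriction of `Φ b` to the domain of `Φ a`:
`y ∈ Φ (op a b) x` iff `x ∈ dom (Φ a)` and `y ∈ Φ b x`. -/
theorem stmt17 {A : Type u} (op : A → A → A)
    (hassoc : ∀ x y z, op (op x y) z = op x (op y z))
    (hidem : ∀ x, op x x = x)
    (hrnb : ∀ x y z, op (op x y) z = op (op y x) z) :
    ∃ (X Y : Type u) (Φ : A → X →. Y), Function.Injective Φ ∧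
      ∀ (a b : A) (x : X) (y : Y),
        y ∈ Φ (op a b) x ↔ ((Φ a x).Dom ∧ y ∈ Φ b x) := by
  refine ⟨A, A, fun a x => ⟨op a x = x, fun _ => op x a⟩, ?_, ?_⟩
  · intro a b hab
    have ha : a ∈ (⟨op a a = a, fun _ => op a a⟩ : Part A) := ⟨hidem a, hidem a⟩
    have hb : a ∈ (⟨op b a = a, fun _ => op a b⟩ : Part A) := by
      have h0 : (⟨op a a = a, fun _ => op a a⟩ : Part A)
          = ⟨op b a = a, fun _ => op a b⟩ := congrFun hab a
      rw [h0] at ha; exact ha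
    obtain ⟨h1, h2⟩ := hb
    have ha' : b ∈ (⟨op b b = b, fun _ => op b b⟩ : Part A) := ⟨hidem b, hidem b⟩
    have hb' : b ∈ (⟨op a b = b, fun _ => op b a⟩ : Part A) := by
      have h0 : (⟨op a b = b, fun _ => op b a⟩ : Part A)
          = ⟨op b b = b, fun _ => op b b⟩ := congrFun hab b
      rw [h0]; exact ha'
    obtain ⟨h3, h4⟩ := hb'
    exact h2 ▸ h3
  · intro a b x y
    constructor
    · rintro ⟨h, rfl⟩
      have h : op (op a b) x = x := h
      have hax : op a x = x := by
        calc op a x = op a (op (op a b) x) := by rw [h]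
        _ = op (op a (op a b)) x := (hassoc a (op a b) x).symm
        _ = op (op (op a a) b) x := by rw [hassoc a a b]
        _ = op (op a b) x := by rw [hidem a]
        _ = x := h
      have hbx : op b x = x := by
        calc op b x = op b (op (op a b) x) := by rw [h]
        _ = op (op b (op a b)) x := (hassoc b (op a b) x).symm
        _ = op (op (op b a) b) x := by rw [hassoc b a b]
        _ = op (op (op a b) b) x := by rw [hrnb b a b]
        _ = op (op a b) x := by rw [hassoc a b b, hidem b]
        _ = x := h
      refine ⟨hax, hbx, ?_⟩
      show op x b = op x (op a b)
      calc op x b = op (op a x) b := by rw [hax]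
      _ = op (op x a) b := hrnb a x b
      _ = op x (op a b) := hassoc x a b
    · rintro ⟨hax, hbx, rfl⟩
      have hbx : op b x = x := hbx
      have h : op (op a b) x = x := by
        rw [hassoc a b x, hbx, hax]
      refine ⟨h, ?_⟩
      show op x (op a b) = op x b
      calc op x (op a b) = op (op x a) b := (hassoc x a b).symm
      _ = op (op a x) b := (hrnb a x b).symm
      _ = op x b := by rw [hax]
end

section
/- (Representation of 1-stacks.) Every 1-stack is isomorphic to an algebra of partial functions under composition and domain restriction: for every 1-stack (A,·,∘) there exist a set X and an injective map Φ from A into the partial self-maps of X such that for all a,b ∈ A, Φ(a·b) is the left-to-right composite of Φ(a) and Φ(b) (i.e. Φ(a·b)(x) = Φ(b)(Φ(a)(x)) where defined), and Φ(a∘b) is the restriction of Φ(b) to the domain of Φ(a). Moreover, if A has an element 0 that is a zero for both operations, then Φ(0) is the empty partial function. -/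
set_option linter.unusedSectionVars false

universe u

namespace Stmt18Aux

variable {A : Type u} (mul op : A → A → A)

/-- `E s` means `s` behaves like the empty partial function for `op`. -/
def E (op : A → A → A) (s : A) : Prop := ∀ c, op s c = s

/-- The representation: points are `A ⊕ A`, where `Sum.inl a` plays the role of
the partial identity on the domain of `a`, and `Sum.inr s` plays the role of the
"state" `s`. The action is by right translation, defined when the translate has
full domain relative to the point (and the point is not empty-like). -/
def Phi (mul op : A → A → A) : A → (A ⊕ A) →. (A ⊕ A)
  | c, Sum.inl a => ⟨¬ E op a ∧ op c a = a, fun _ => Sum.inr (op a c)⟩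
  | c, Sum.inr s => ⟨¬ E op s ∧ op (mul s c) s = s, fun _ => Sum.inr (mul s c)⟩

theorem mem_Phi_inl {c a : A} {y : A ⊕ A} :
    y ∈ Phi mul op c (Sum.inl a) ↔ ((¬ E op a ∧ op c a = a) ∧ Sum.inr (op a c) = y) :=
  ⟨fun ⟨h, e⟩ => ⟨h, e⟩, fun ⟨h, e⟩ => ⟨h, e⟩⟩

theorem mem_Phi_inr {c s : A} {y : A ⊕ A} :
    y ∈ Phi mul op c (Sum.inr s) ↔
      ((¬ E op s ∧ op (mul s c) s = s) ∧ Sum.inr (mul s c) = y) :=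
  ⟨fun ⟨h, e⟩ => ⟨h, e⟩, fun ⟨h, e⟩ => ⟨h, e⟩⟩

theorem dom_Phi_inl {c a : A} :
    (Phi mul op c (Sum.inl a)).Dom ↔ (¬ E op a ∧ op c a = a) := Iff.rfl

theorem dom_Phi_inr {c s : A} :
    (Phi mul op c (Sum.inr s)).Dom ↔ (¬ E op s ∧ op (mul s c) s = s) := Iff.rfl

section Lemmas

variable (hmul_assoc : ∀ x y z, mul (mul x y) z = mul x (mul y z))
    (hop_assoc : ∀ x y z, op (op x y) z = op x (op y z))
    (hidem : ∀ x, op x x = x)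
    (hrnb : ∀ x y z, op (op x y) z = op (op y x) z)
    (hstack1 : ∀ a b c, op a (mul b c) = mul (op a b) c)
    (hstack2 : ∀ a b c, mul a (op b c) = op (mul a b) (mul a c))

include hmul_assoc hop_assoc hidem hrnb hstack1 hstack2 in
theorem Euniq {a b : A} (ha : E op a) (hb : E op b) : a = b := by
  calc a = op a b := (ha b).symm
    _ = op a (op b b) := by rw [hidem]
    _ = op (op a b) b := (hop_assoc _ _ _).symm
    _ = op (op b a) b := hrnb _ _ _
    _ = op b (op a b) := hop_assoc _ _ _
    _ = b := hb _

include hmul_assoc hop_assoc hidem hrnb hstack1 hstack2 in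
theorem B1 {u v x : A} : op (op u v) x = x ↔ (op u x = x ∧ op v x = x) := by
  constructor
  · intro h
    constructor
    · calc op u x = op u (op (op u v) x) := by rw [h]
        _ = op (op u (op u v)) x := (hop_assoc _ _ _).symm
        _ = op (op (op u u) v) x := by rw [hop_assoc u u v]
        _ = op (op u v) x := by rw [hidem]
        _ = x := h
    · calc op v x = op v (op (op u v) x) := by rw [h]
        _ = op (op v (op u v)) x := (hop_assoc _ _ _).symm
        _ = op (op (op v u) v) x := by rw [hop_assoc v u v]
        _ = op (op (op u v) v) x := by rw [hrnb v u]
        _ = op (op u (op v v)) x := by rw [hop_assoc u v v]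
        _ = op (op u v) x := by rw [hidem]
        _ = x := h
  · rintro ⟨h1, h2⟩
    calc op (op u v) x = op (op v u) x := hrnb u v x
      _ = op v (op u x) := hop_assoc _ _ _
      _ = op v x := by rw [h1]
      _ = x := h2

include hmul_assoc hop_assoc hidem hrnb hstack1 hstack2 in
theorem valA {x a b : A} (h : op (mul x a) x = x) :
    mul x (op a b) = mul x b := by
  calc mul x (op a b) = op (mul x a) (mul x b) := hstack2 _ _ _
    _ = mul (op (mul x a) x) b := hstack1 _ _ _
    _ = mul x b := by rw [h]

include hmul_assoc hop_assoc hidem hrnb hstack1 hstack2 in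
theorem L1 {s c : A} (hs : ¬ E op s) (h : op (mul s c) s = s) :
    ¬ E op (mul s c) := by
  intro hE
  apply hs
  have hsc : s = mul s c := h.symm.trans (hE s)
  intro d
  have hd : op (mul s c) d = mul s c := hE d
  rwa [← hsc] at hd

include hmul_assoc hop_assoc hidem hrnb hstack1 hstack2 in
theorem L2 {a c : A} (ha : ¬ E op a) (h : op c a = a) :
    ¬ E op (op a c) := by
  intro hE
  apply ha
  have key : ∀ d, op a d = op a c := by
    intro d
    calc op a d = op (op c a) d := by rw [h]
      _ = op (op a c) d := hrnb c a d
      _ = op a c := hE d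
  have haca : op a c = a := by rw [← key a, hidem]
  intro d
  rw [key d, haca]

include hmul_assoc hop_assoc hidem hrnb hstack1 hstack2 in
/-- Composition condition at an `inr` (state) point. -/
theorem Ccomp {s a b : A} :
    op (mul s (mul a b)) s = s ↔
      (op (mul s a) s = s ∧ op (mul (mul s a) b) (mul s a) = mul s a) := by
  have key : mul s (mul a b) = mul (mul s a) b := (hmul_assoc _ _ _).symm
  rw [key]
  set u := mul s a with hu
  constructor
  · intro h
    have h1 : op u s = s := by
      calc op u s = op u (op (mul u b) s) := by rw [h]
        _ = op (op u (mul u b)) s := (hop_assoc _ _ _).symm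
        _ = op (mul (op u u) b) s := by rw [hstack1]
        _ = op (mul u b) s := by rw [hidem]
        _ = s := h
    refine ⟨h1, ?_⟩
    calc op (mul u b) u = op (mul u b) (mul s a) := rfl
      _ = mul (op (mul u b) s) a := hstack1 _ _ _
      _ = mul s a := by rw [h]
      _ = u := rfl
  · rintro ⟨h1, h2⟩
    calc op (mul u b) s = op (mul u b) (op u s) := by rw [h1]
      _ = op (op (mul u b) u) s := (hop_assoc _ _ _).symm
      _ = op u s := by rw [h2]
      _ = s := h1

include hmul_assoc hop_assoc hidem hrnb hstack1 hstack2 in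
/-- Composition condition at an `inl` (partial identity) point. -/
theorem Icomp {a b c : A} :
    op (mul b c) a = a ↔
      (op b a = a ∧ op (mul (op a b) c) (op a b) = op a b) := by
  constructor
  · intro h
    have h1 : op b a = a := by
      calc op b a = op b (op (mul b c) a) := by rw [h]
        _ = op (op b (mul b c)) a := (hop_assoc _ _ _).symm
        _ = op (mul (op b b) c) a := by rw [hstack1]
        _ = op (mul b c) a := by rw [hidem]
        _ = a := h
    refine ⟨h1, ?_⟩
    calc op (mul (op a b) c) (op a b)
        = op (op a (mul b c)) (op a b) := by rw [hstack1]
      _ = op (op (mul b c) a) (op a b) := hrnb _ _ _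
      _ = op (mul b c) (op a (op a b)) := hop_assoc _ _ _
      _ = op (mul b c) (op (op a a) b) := by rw [hop_assoc a a b]
      _ = op (mul b c) (op a b) := by rw [hidem]
      _ = op (op (mul b c) a) b := (hop_assoc _ _ _).symm
      _ = op a b := by rw [h]
  · rintro ⟨h1, h2⟩
    have key : op (op (mul b c) a) b = op a b := by
      calc op (op (mul b c) a) b
          = op (mul b c) (op a b) := hop_assoc _ _ _
        _ = op (mul b c) (op (op a a) b) := by rw [hidem]
        _ = op (mul b c) (op a (op a b)) := by rw [hop_assoc a a b]
        _ = op (op (mul b c) a) (op a b) := (hop_assoc _ _ _).symm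
        _ = op (op a (mul b c)) (op a b) := (hrnb _ _ _)
        _ = op (mul (op a b) c) (op a b) := by rw [hstack1]
        _ = op a b := h2
    calc op (mul b c) a
        = op (mul b c) (op a a) := by rw [hidem]
      _ = op (op (mul b c) a) a := (hop_assoc _ _ _).symm
      _ = op (op (op (mul b c) a) a) a := by
            rw [hop_assoc (op (mul b c) a) a a, hidem]
      _ = op (op (op (mul b c) a) (op b a)) a := by rw [h1]
      _ = op (op (op (op (mul b c) a) b) a) a := by
            rw [hop_assoc (op (mul b c) a) b a]
      _ = op (op (op a b) a) a := by rw [key]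
      _ = op (op (op b a) a) a := by rw [hrnb a b]
      _ = op (op b (op a a)) a := by rw [hop_assoc b a a]
      _ = op (op b a) a := by rw [hidem]
      _ = op a a := by rw [h1]
      _ = a := hidem a

include hmul_assoc hop_assoc hidem hrnb hstack1 hstack2 in
theorem IrestrVal {a b c : A} (h1 : op b a = a) :
    op a (op b c) = op a c := by
  calc op a (op b c) = op (op a b) c := (hop_assoc _ _ _).symm
    _ = op (op b a) c := hrnb _ _ _
    _ = op a c := by rw [h1]

end Lemmas

end Stmt18Aux

open Stmt18Aux in
/-- Representation of 1-stacks: every 1-stack `(A, mul, op)` is isomorphic to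
an algebra of partial functions under (left-to-right) composition and domain
restriction; moreover any two-sided zero for both operations is represented
as the empty partial function. -/
theorem stmt18 {A : Type u} (mul op : A → A → A)
    (hmul_assoc : ∀ x y z, mul (mul x y) z = mul x (mul y z))
    (hop_assoc : ∀ x y z, op (op x y) z = op x (op y z))
    (hidem : ∀ x, op x x = x)
    (hrnb : ∀ x y z, op (op x y) z = op (op y x) z)
    (hstack1 : ∀ a b c, op a (mul b c) = mul (op a b) c)
    (hstack2 : ∀ a b c, mul a (op b c) = op (mul a b) (mul a c)) :
    ∃ (X : Type u) (Φ : A → X →. X), Function.Injective Φ ∧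
      -- composition is represented (left-to-right composite)
      (∀ (a b : A) (x y : X),
        y ∈ Φ (mul a b) x ↔ ∃ z : X, z ∈ Φ a x ∧ y ∈ Φ b z) ∧
      -- domain restriction is represented
      (∀ (a b : A) (x : X) (y : X),
        y ∈ Φ (op a b) x ↔ ((Φ a x).Dom ∧ y ∈ Φ b x)) ∧
      -- a zero for both operations is the empty partial function
      (∀ z : A, (∀ s : A, mul z s = z ∧ mul s z = z ∧ op z s = z ∧ op s z = z) →
        ∀ x : X, ¬ (Φ z x).Dom) := by
  classical
  have HB1 := @B1 A mul op hmul_assoc hop_assoc hidem hrnb hstack1 hstack2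
  have HvalA := @valA A mul op hmul_assoc hop_assoc hidem hrnb hstack1 hstack2
  have HL1 := @L1 A mul op hmul_assoc hop_assoc hidem hrnb hstack1 hstack2
  have HL2 := @L2 A mul op hmul_assoc hop_assoc hidem hrnb hstack1 hstack2
  have HCcomp := @Ccomp A mul op hmul_assoc hop_assoc hidem hrnb hstack1 hstack2
  have HIcomp := @Icomp A mul op hmul_assoc hop_assoc hidem hrnb hstack1 hstack2
  have HIrV := @IrestrVal A mul op hmul_assoc hop_assoc hidem hrnb hstack1 hstack2
  refine ⟨A ⊕ A, Phi mul op, ?_, ?_, ?_, ?_⟩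
  · -- injectivity
    intro a b h
    by_cases ha : E op a
    · by_cases hb : E op b
      · exact Euniq mul op hmul_assoc hop_assoc hidem hrnb hstack1 hstack2 ha hb
      · have hmem : (Sum.inr b : A ⊕ A) ∈ Phi mul op b (Sum.inl b) :=
          (mem_Phi_inl mul op).mpr ⟨⟨hb, hidem b⟩, congrArg Sum.inr (hidem b)⟩
        rw [← h] at hmem
        obtain ⟨⟨-, hab⟩, -⟩ := (mem_Phi_inl mul op).mp hmem
        rw [ha b] at hab
        exact hab
    · have hmem : (Sum.inr a : A ⊕ A) ∈ Phi mul op a (Sum.inl a) :=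
        (mem_Phi_inl mul op).mpr ⟨⟨ha, hidem a⟩, congrArg Sum.inr (hidem a)⟩
      rw [h] at hmem
      obtain ⟨⟨-, hba⟩, hval⟩ := (mem_Phi_inl mul op).mp hmem
      have hab : op a b = a := Sum.inr.inj hval
      by_cases hb : E op b
      · exact ((hb a).symm.trans hba).symm
      · have hmem3 : (Sum.inr b : A ⊕ A) ∈ Phi mul op b (Sum.inl b) :=
          (mem_Phi_inl mul op).mpr ⟨⟨hb, hidem b⟩, congrArg Sum.inr (hidem b)⟩
        rw [← h] at hmem3
        obtain ⟨⟨-, hab2⟩, -⟩ := (mem_Phi_inl mul op).mp hmem3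
        exact hab.symm.trans hab2
  · -- composition
    intro a b x y
    cases x with
    | inl s =>
      rw [mem_Phi_inl mul op]
      constructor
      · rintro ⟨⟨hs, hcond⟩, rfl⟩
        obtain ⟨h1, h2⟩ := HIcomp.mp hcond
        refine ⟨Sum.inr (op s a),
          (mem_Phi_inl mul op).mpr ⟨⟨hs, h1⟩, rfl⟩,
          (mem_Phi_inr mul op).mpr ⟨⟨HL2 hs h1, h2⟩, ?_⟩⟩
        exact congrArg Sum.inr (hstack1 s a b).symm
      · rintro ⟨z, hz, hy⟩
        obtain ⟨⟨hs, h1⟩, rfl⟩ := (mem_Phi_inl mul op).mp hz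
        obtain ⟨⟨-, h2⟩, rfl⟩ := (mem_Phi_inr mul op).mp hy
        exact ⟨⟨hs, HIcomp.mpr ⟨h1, h2⟩⟩, congrArg Sum.inr (hstack1 s a b)⟩
    | inr s =>
      rw [mem_Phi_inr mul op]
      constructor
      · rintro ⟨⟨hs, hcond⟩, rfl⟩
        obtain ⟨h1, h2⟩ := HCcomp.mp hcond
        refine ⟨Sum.inr (mul s a),
          (mem_Phi_inr mul op).mpr ⟨⟨hs, h1⟩, rfl⟩,
          (mem_Phi_inr mul op).mpr ⟨⟨HL1 hs h1, h2⟩, ?_⟩⟩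
        exact congrArg Sum.inr (hmul_assoc s a b)
      · rintro ⟨z, hz, hy⟩
        obtain ⟨⟨hs, h1⟩, rfl⟩ := (mem_Phi_inr mul op).mp hz
        obtain ⟨⟨-, h2⟩, rfl⟩ := (mem_Phi_inr mul op).mp hy
        exact ⟨⟨hs, HCcomp.mpr ⟨h1, h2⟩⟩, congrArg Sum.inr (hmul_assoc s a b).symm⟩
  · -- domain restriction
    intro a b x y
    cases x with
    | inl s =>
      rw [mem_Phi_inl mul op, mem_Phi_inl mul op, dom_Phi_inl mul op]
      constructor
      · rintro ⟨⟨hs, hcond⟩, rfl⟩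
        obtain ⟨h1, h2⟩ := HB1.mp hcond
        exact ⟨⟨hs, h1⟩, ⟨hs, h2⟩, congrArg Sum.inr (HIrV h1).symm⟩
      · rintro ⟨⟨hs, h1⟩, ⟨-, h2⟩, rfl⟩
        exact ⟨⟨hs, HB1.mpr ⟨h1, h2⟩⟩, congrArg Sum.inr (HIrV h1)⟩
    | inr s =>
      rw [mem_Phi_inr mul op, mem_Phi_inr mul op, dom_Phi_inr mul op]
      have key : mul s (op a b) = op (mul s a) (mul s b) := hstack2 s a b
      constructor
      · rintro ⟨⟨hs, hcond⟩, rfl⟩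
        rw [key] at hcond
        obtain ⟨h1, h2⟩ := HB1.mp hcond
        exact ⟨⟨hs, h1⟩, ⟨hs, h2⟩, congrArg Sum.inr (HvalA h1).symm⟩
      · rintro ⟨⟨hs, h1⟩, ⟨-, h2⟩, rfl⟩
        refine ⟨⟨hs, ?_⟩, congrArg Sum.inr (HvalA h1)⟩
        rw [key]
        exact HB1.mpr ⟨h1, h2⟩
  · -- zero is represented by the empty partial function
    intro z hz x
    have hEz : E op z := fun c => (hz c).2.2.1
    cases x with
    | inl s =>
      rintro ⟨hs, hcond⟩
      have hsz : s = z := by rw [← hcond, hEz s]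
      exact hs (hsz ▸ hEz)
    | inr s =>
      rintro ⟨hs, hcond⟩
      rw [(hz s).2.1, hEz s] at hcond
      exact hs (hcond ▸ hEz)
end

section
/- (Representation of minus-algebras.) Every minus-algebra is isomorphic to an algebra of partial functions under the minus operation: for every minus-algebra (A,−) there exist sets X and Y and an injective map Φ from A into the partial functions from X to Y such that for all a,b ∈ A, Φ(a−b) is the partial function with (Φ(a−b))(x) = Φ(a)(x) for x ∈ dom(Φ(a)) \ dom(Φ(b)) and undefined otherwise; consequently Φ(0) is the empty partial function and Φ(a∘b) is the restriction of Φ(b) to the domain of Φ(a). -/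
universe u

namespace MinusAlgAux

variable {A : Type u} {op sub : A → A → A} {z : A}

/-- if `t∘x = t` then `x∘t = t` -/
lemma b1 (h : IsMinusAlg op sub z) {t x : A} (htx : op t x = t) : op x t = t := by
  obtain ⟨hop, hassoc, hidem, hnorm, hss, hopz, hzop, h8, h9, h10, hq⟩ := id h
  calc op x t = op x (op t x) := by rw [htx]
    _ = op (op x t) x := (hassoc x t x).symm
    _ = op (op t x) x := hnorm x t x
    _ = op t (op x x) := hassoc t x x
    _ = op t x := by rw [hidem]
    _ = t := htx

/-- if `f∘e = e` and `e∘f = f` then `e∘x = f∘x` -/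
lemma b2 (h : IsMinusAlg op sub z) {e f : A} (hfe : op f e = e) (hef : op e f = f)
    (x : A) : op e x = op f x := by
  obtain ⟨hop, hassoc, hidem, hnorm, hss, hopz, hzop, h8, h9, h10, hq⟩ := id h
  calc op e x = op (op f e) x := by rw [hfe]
    _ = op (op e f) x := hnorm f e x
    _ = op f x := by rw [hef]

lemma sub_z (h : IsMinusAlg op sub z) (x : A) : sub x z = x := by
  obtain ⟨hop, hassoc, hidem, hnorm, hss, hopz, hzop, h8, h9, h10, hq⟩ := id h
  have := (hop x x).symm.trans (hidem x)
  rwa [hss] at this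

lemma z_sub (h : IsMinusAlg op sub z) (x : A) : sub z x = z := by
  obtain ⟨hop, hassoc, hidem, hnorm, hss, hopz, hzop, h8, h9, h10, hq⟩ := id h
  have h1 := h8 z x
  rw [hopz] at h1
  exact h1.symm

/-- `a−b = z → b∘a = a` -/
lemma t7a (h : IsMinusAlg op sub z) {a b : A} (hab : sub a b = z) : op b a = a := by
  obtain ⟨hop, hassoc, hidem, hnorm, hss, hopz, hzop, h8, h9, h10, hq⟩ := id h
  rw [hop b a, hab, sub_z h]

/-- `b∘a = a → a−b = z` -/
lemma t7b (h : IsMinusAlg op sub z) {a b : A} (hba : op b a = a) : sub a b = z := by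
  obtain ⟨hop, hassoc, hidem, hnorm, hss, hopz, hzop, h8, h9, h10, hq⟩ := id h
  have h1 := h10 b b a
  rw [hss, hzop, hba] at h1
  exact h1.symm

/-- `x∘(x−y) = x−y` -/
lemma xsub (h : IsMinusAlg op sub z) (x y : A) : op x (sub x y) = sub x y := by
  obtain ⟨hop, hassoc, hidem, hnorm, hss, hopz, hzop, h8, h9, h10, hq⟩ := id h
  calc op x (sub x y) = op x (op (sub x y) x) := by rw [h8]
    _ = op (op x (sub x y)) x := (hassoc _ _ _).symm
    _ = op (op (sub x y) x) x := hnorm x (sub x y) x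
    _ = op (sub x y) (op x x) := hassoc _ _ _
    _ = op (sub x y) x := by rw [hidem]
    _ = sub x y := h8 x y

/-- `y∘(u−y) = z` -/
lemma t10 (h : IsMinusAlg op sub z) (y u : A) : op y (sub u y) = z := by
  obtain ⟨hop, hassoc, hidem, hnorm, hss, hopz, hzop, h8, h9, h10, hq⟩ := id h
  calc op y (sub u y) = op y (op (sub u y) u) := by rw [h8]
    _ = op (op y (sub u y)) u := (hassoc _ _ _).symm
    _ = op (op (sub u y) y) u := hnorm y (sub u y) u
    _ = op z u := by rw [h9]
    _ = z := hzop u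

lemma t12 (h : IsMinusAlg op sub z) {c y : A} (hcy : op c y = z) : op y c = z := by
  obtain ⟨hop, hassoc, hidem, hnorm, hss, hopz, hzop, h8, h9, h10, hq⟩ := id h
  have h1 : op (op y c) c = op y c := by rw [hassoc, hidem]
  have h2 : op c (op y c) = op y c := b1 h h1
  have h3 : op c (op y c) = z := by
    calc op c (op y c) = op (op c y) c := (hassoc _ _ _).symm
      _ = op z c := by rw [hcy]
      _ = z := hzop c
  exact h2.symm.trans h3

/-- `y∘s = z → s−y = s` -/
lemma t8' (h : IsMinusAlg op sub z) {y s : A} (hys : op y s = z) : sub s y = s := by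
  obtain ⟨hop, hassoc, hidem, hnorm, hss, hopz, hzop, h8, h9, h10, hq⟩ := id h
  have h1 : sub s (sub s y) = z := (hop y s).symm.trans hys
  have h2 : op (sub s y) s = s := t7a h h1
  exact ((h8 s y).symm.trans h2)

/-- `(x−y)−y = x−y` -/
lemma t3 (h : IsMinusAlg op sub z) (x y : A) : sub (sub x y) y = sub x y :=
  t8' h (t10 h y x)

/-- domain gluing: `g∘(u−v) = z → g∘v = z → g∘u = z` -/
lemma gd (h : IsMinusAlg op sub z) {g u v : A}
    (hg1 : op g (sub u v) = z) (hg2 : op g v = z) : op g u = z := by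
  obtain ⟨hop, hassoc, hidem, hnorm, hss, hopz, hzop, h8, h9, h10, hq⟩ := id h
  have hvg : op v g = z := t12 h hg2
  have huvg : op (sub u v) g = z := t12 h hg1
  have key : op u g = z := by
    apply hq (op u g) z (sub u v)
    · have e1 := h10 u (sub u v) g
      rw [← hop v u] at e1
      -- e1 : op (op v u) g = sub (op u g) (sub u v)
      rw [← e1, z_sub h]
      calc op (op v u) g = op (op u v) g := hnorm v u g
        _ = op u (op v g) := hassoc _ _ _
        _ = op u z := by rw [hvg]
        _ = z := hopz u
    · calc op (sub u v) (op u g) = op (op (sub u v) u) g := (hassoc _ _ _).symm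
        _ = op (sub u v) g := by rw [h8]
        _ = z := huvg
        _ = op (sub u v) z := (hopz _).symm
  exact t12 h key

/-- `c−(c∘w) = c−w` -/
lemma t15 (h : IsMinusAlg op sub z) (c w : A) : sub c (op c w) = sub c w := by
  obtain ⟨hop, hassoc, hidem, hnorm, hss, hopz, hzop, h8, h9, h10, hq⟩ := id h
  have hdf : op (op c w) (sub c w) = z := by
    calc op (op c w) (sub c w) = op c (op w (sub c w)) := hassoc _ _ _
      _ = op c z := by rw [t10 h w c]
      _ = z := hopz c
  have hef : op (sub c (op c w)) (sub c w) = sub c w := by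
    calc op (sub c (op c w)) (sub c w) = sub (op c (sub c w)) (op c w) :=
          h10 c (op c w) (sub c w)
      _ = sub (sub c w) (op c w) := by rw [xsub h c w]
      _ = sub c w := t8' h hdf
  have hew : op (sub c (op c w)) w = z := by
    have := h10 c (op c w) w
    rw [this, hss]
  have hwe : op w (sub c (op c w)) = z := t12 h hew
  have hfe : op (sub c w) (sub c (op c w)) = sub c (op c w) := by
    calc op (sub c w) (sub c (op c w)) = sub (op c (sub c (op c w))) w :=
          h10 c w (sub c (op c w))
      _ = sub (sub c (op c w)) w := by rw [xsub h c (op c w)]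
      _ = sub c (op c w) := t8' h hwe
  have hb := b2 h hfe hef c
  rw [h8, h8] at hb
  exact hb

/-- `c∘v = z → c−(u−v) = c−u` -/
lemma t16 (h : IsMinusAlg op sub z) {c v : A} (hcv : op c v = z) (u : A) :
    sub c (sub u v) = sub c u := by
  obtain ⟨hop, hassoc, hidem, hnorm, hss, hopz, hzop, h8, h9, h10, hq⟩ := id h
  have hce : op c (sub c (sub u v)) = sub c (sub u v) := xsub h c (sub u v)
  have hev : op (sub c (sub u v)) v = z := by
    calc op (sub c (sub u v)) v = op (op c (sub c (sub u v))) v := by rw [hce]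
      _ = op (op (sub c (sub u v)) c) v := hnorm c _ v
      _ = op (sub c (sub u v)) (op c v) := hassoc _ _ _
      _ = op (sub c (sub u v)) z := by rw [hcv]
      _ = z := hopz _
  have heu : op (sub c (sub u v)) u = z := gd h (h9 c (sub u v)) hev
  have hue : op u (sub c (sub u v)) = z := t12 h heu
  have hfe : op (sub c u) (sub c (sub u v)) = sub c (sub u v) := by
    calc op (sub c u) (sub c (sub u v)) = sub (op c (sub c (sub u v))) u :=
          h10 c u _
      _ = sub (sub c (sub u v)) u := by rw [hce]
      _ = sub c (sub u v) := t8' h hue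
  have hfuv : op (sub c u) (sub u v) = z := by
    calc op (sub c u) (sub u v) = op (sub c u) (op u (sub u v)) := by rw [xsub h u v]
      _ = op (op (sub c u) u) (sub u v) := (hassoc _ _ _).symm
      _ = op z (sub u v) := by rw [h9]
      _ = z := hzop _
  have huvf : op (sub u v) (sub c u) = z := t12 h hfuv
  have hef : op (sub c (sub u v)) (sub c u) = sub c u := by
    calc op (sub c (sub u v)) (sub c u) = sub (op c (sub c u)) (sub u v) :=
          h10 c (sub u v) _
      _ = sub (sub c u) (sub u v) := by rw [xsub h c u]
      _ = sub c u := t8' h huvf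
  have hb := b2 h hfe hef c
  rw [h8, h8] at hb
  exact hb

/-- `c∘v = z → c∘(u−v) = c∘u` -/
lemma t11 (h : IsMinusAlg op sub z) {c v : A} (hcv : op c v = z) (u : A) :
    op c (sub u v) = op c u := by
  obtain ⟨hop, hassoc, hidem, hnorm, hss, hopz, hzop, h8, h9, h10, hq⟩ := id h
  have hts : op (op c u) (op c (sub u v)) = op c (sub u v) := by
    calc op (op c u) (op c (sub u v))
        = op c (op u (op c (sub u v))) := hassoc _ _ _
      _ = op c (op (op u c) (sub u v)) := by rw [hassoc u c (sub u v)]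
      _ = op c (op (op c u) (sub u v)) := by rw [hnorm u c (sub u v)]
      _ = op c (op c (op u (sub u v))) := by rw [hassoc c u (sub u v)]
      _ = op c (op c (sub u v)) := by rw [xsub h u v]
      _ = op (op c c) (sub u v) := (hassoc _ _ _).symm
      _ = op c (sub u v) := by rw [hidem]
  have hsubts : sub (op c u) (op c (sub u v)) = z := by
    have e1 := h10 c (op c (sub u v)) u
    rw [t15 h c (sub u v), t16 h hcv u] at e1
    rw [← e1]
    exact h9 c u
  have hst : op (op c (sub u v)) (op c u) = op c u := t7a h hsubts
  have hb := b2 h hts hst u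
  calc op c (sub u v) = op c (op (sub u v) u) := by rw [h8]
    _ = op (op c (sub u v)) u := (hassoc _ _ _).symm
    _ = op (op c u) u := hb
    _ = op c (op u u) := hassoc _ _ _
    _ = op c u := by rw [hidem]

/-- `m∘(u−v) = (m∘u)−v` -/
lemma t9 (h : IsMinusAlg op sub z) (m u v : A) :
    op m (sub u v) = sub (op m u) v := by
  obtain ⟨hop, hassoc, hidem, hnorm, hss, hopz, hzop, h8, h9, h10, hq⟩ := id h
  apply hq _ _ v
  · rw [t3 h (op m u) v]
    calc sub (op m (sub u v)) v = op (sub m v) (sub u v) := (h10 m v (sub u v)).symm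
      _ = op (sub m v) u := t11 h (h9 m v) u
      _ = sub (op m u) v := h10 m v u
  · rw [t10 h v (op m u)]
    calc op v (op m (sub u v)) = op (op v m) (sub u v) := (hassoc _ _ _).symm
      _ = op (op m v) (sub u v) := hnorm v m _
      _ = op m (op v (sub u v)) := hassoc _ _ _
      _ = op m z := by rw [t10 h v u]
      _ = z := hopz m

lemma le_trans' (h : IsMinusAlg op sub z) {a b c : A}
    (hba : op b a = a) (hcb : op c b = b) : op c a = a := by
  obtain ⟨hop, hassoc, hidem, hnorm, hss, hopz, hzop, h8, h9, h10, hq⟩ := id h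
  calc op c a = op c (op b a) := by rw [hba]
    _ = op (op c b) a := (hassoc _ _ _).symm
    _ = op b a := by rw [hcb]
    _ = a := hba

lemma le_meet (h : IsMinusAlg op sub z) {w w' x : A}
    (hw : op w x = x) (hw' : op w' x = x) : op (op w w') x = x := by
  obtain ⟨hop, hassoc, hidem, hnorm, hss, hopz, hzop, h8, h9, h10, hq⟩ := id h
  calc op (op w w') x = op w (op w' x) := hassoc _ _ _
    _ = op w x := by rw [hw']
    _ = x := hw

lemma le_op_left (h : IsMinusAlg op sub z) (x y : A) : op x (op x y) = op x y := by
  obtain ⟨hop, hassoc, hidem, hnorm, hss, hopz, hzop, h8, h9, h10, hq⟩ := id h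
  calc op x (op x y) = op (op x x) y := (hassoc _ _ _).symm
    _ = op x y := by rw [hidem]

lemma le_op_right (h : IsMinusAlg op sub z) (x y : A) : op y (op x y) = op x y := by
  obtain ⟨hop, hassoc, hidem, hnorm, hss, hopz, hzop, h8, h9, h10, hq⟩ := id h
  calc op y (op x y) = op (op y x) y := (hassoc _ _ _).symm
    _ = op (op x y) y := hnorm y x y
    _ = op x (op y y) := hassoc _ _ _
    _ = op x y := by rw [hidem]

/-- filters w.r.t. the domain order -/
def isFil (op : A → A → A) (p : Set A) : Prop :=
  (∀ x ∈ p, ∀ y ∈ p, op x y ∈ p) ∧ (∀ x ∈ p, ∀ y, op y x = x → y ∈ p)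

/-- prime filters -/
def isPF (op sub : A → A → A) (z : A) (p : Set A) : Prop :=
  isFil op p ∧ z ∉ p ∧ ∀ x ∈ p, ∀ y, op x y ∈ p ∨ sub x y ∈ p

/-- Zorn: every element whose up-set avoids a suitable "ideal" `C` lies in a
prime filter disjoint from `C`. -/
lemma existsPF (h : IsMinusAlg op sub z) (C : Set A) (hzC : z ∈ C)
    (hdown : ∀ c ∈ C, ∀ d, op c d = d → d ∈ C)
    (hmult : ∀ c ∈ C, ∀ d, op d c ∈ C)
    (hglue : ∀ r v, op r v ∈ C → sub r v ∈ C → r ∈ C)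
    {a : A} (ha : ∀ c, op c a = a → c ∉ C) :
    ∃ p : Set A, isPF op sub z p ∧ a ∈ p ∧ ∀ c ∈ p, c ∉ C := by
  obtain ⟨hop, hassoc, hidem, hnorm, hss, hopz, hzop, h8, h9, h10, hq⟩ := id h
  set S : Set (Set A) := {p | isFil op p ∧ a ∈ p ∧ ∀ c ∈ p, c ∉ C} with hS
  have hbase : {w | op w a = a} ∈ S := by
    refine ⟨⟨?_, ?_⟩, hidem a, fun c hc => ha c hc⟩
    · intro x hx y hy
      show op (op x y) a = a
      rw [hassoc, hy, hx]
    · intro x hx y hyx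
      exact le_trans' h hx hyx
  have hchain : ∀ c ⊆ S, IsChain (· ⊆ ·) c → c.Nonempty →
      ∃ ub ∈ S, ∀ s ∈ c, s ⊆ ub := by
    rintro c hcS hch ⟨p₀, hp₀⟩
    refine ⟨⋃₀ c, ⟨⟨?_, ?_⟩, Set.mem_sUnion.2 ⟨p₀, hp₀, (hcS hp₀).2.1⟩, ?_⟩,
      fun s hs => Set.subset_sUnion_of_mem hs⟩
    · rintro x ⟨p₁, hp₁, hx⟩ y ⟨p₂, hp₂, hy⟩
      rcases hch.total hp₁ hp₂ with h12 | h21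
      · exact ⟨p₂, hp₂, (hcS hp₂).1.1 x (h12 hx) y hy⟩
      · exact ⟨p₁, hp₁, (hcS hp₁).1.1 x hx y (h21 hy)⟩
    · rintro x ⟨p₁, hp₁, hx⟩ y hyx
      exact ⟨p₁, hp₁, (hcS hp₁).1.2 x hx y hyx⟩
    · rintro x ⟨p₁, hp₁, hx⟩
      exact (hcS hp₁).2.2 x hx
  obtain ⟨M, -, hMmax⟩ := zorn_subset_nonempty S hchain _ hbase
  obtain ⟨⟨hMF1, hMF2⟩, haM, hMC⟩ := hMmax.1
  have extend : ∀ e : A, e ∉ M → ∃ s ∈ M, op s e ∈ C := by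
    intro e he
    set M₁ : Set A := {w | ∃ s ∈ M, op w (op s e) = op s e} with hM₁
    have hMsub : M ⊆ M₁ := fun w hw => ⟨w, hw, le_op_left h w e⟩
    have heM₁ : e ∈ M₁ := ⟨a, haM, le_op_right h a e⟩
    have hfil : isFil op M₁ := by
      constructor
      · rintro x ⟨s, hsM, hx⟩ y ⟨s', hs'M, hy⟩
        refine ⟨op s s', hMF1 s hsM s' hs'M, ?_⟩
        have hg : op (op s s') e = op s (op s' e) := hassoc s s' e
        rw [hg]
        -- g := op s (op s' e)
        have hsg : op s (op s (op s' e)) = op s (op s' e) := le_op_left h s _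
        have hs'g : op (op s' e) (op s (op s' e)) = op s (op s' e) :=
          le_op_right h s (op s' e)
        have heg : op e (op s (op s' e)) = op s (op s' e) :=
          le_trans' h hs'g (le_op_right h s' e)
        have hseg : op (op s e) (op s (op s' e)) = op s (op s' e) :=
          le_meet h hsg heg
        have hxg : op x (op s (op s' e)) = op s (op s' e) := le_trans' h hseg hx
        have hs'e_s' : op s' (op s (op s' e)) = op s (op s' e) :=
          le_trans' h hs'g (le_op_left h s' e)
        have hs'eg : op (op s' e) (op s (op s' e)) = op s (op s' e) := hs'g
        have hyg : op y (op s (op s' e)) = op s (op s' e) := le_trans' h hs'eg hy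
        exact le_meet h hxg hyg
      · rintro x ⟨s, hsM, hx⟩ y hyx
        exact ⟨s, hsM, le_trans' h hx hyx⟩
    have hmeet : ∃ w₀ ∈ M₁, w₀ ∈ C := by
      by_contra hno
      push_neg at hno
      have hM₁S : M₁ ∈ S := ⟨hfil, hMsub haM, hno⟩
      have := hMmax.2 hM₁S hMsub
      exact he (this heM₁)
    obtain ⟨w₀, ⟨s, hsM, hsle⟩, hw₀C⟩ := hmeet
    exact ⟨s, hsM, hdown w₀ hw₀C _ hsle⟩
  refine ⟨M, ⟨⟨hMF1, hMF2⟩, fun hzM => hMC z hzM hzC, ?_⟩, haM, hMC⟩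
  intro u hu v
  by_contra hcon
  push_neg at hcon
  obtain ⟨huv, husub⟩ := hcon
  obtain ⟨s, hsM, hsC⟩ := extend (op u v) huv
  obtain ⟨t, htM, htC⟩ := extend (sub u v) husub
  have hrM : op (op s t) u ∈ M := hMF1 _ (hMF1 s hsM t htM) u hu
  have hc₁ : op (op (op s t) u) v ∈ C := by
    have h1 : op t (op s (op u v)) ∈ C := hmult _ hsC t
    have he : op t (op s (op u v)) = op (op (op s t) u) v := by
      calc op t (op s (op u v)) = op (op t s) (op u v) := (hassoc _ _ _).symm
        _ = op (op s t) (op u v) := hnorm t s (op u v)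
        _ = op (op (op s t) u) v := (hassoc _ _ _).symm
    rwa [he] at h1
  have hc₂ : sub (op (op s t) u) v ∈ C := by
    have h1 : op s (op t (sub u v)) ∈ C := hmult _ htC s
    have he : op s (op t (sub u v)) = sub (op (op s t) u) v := by
      calc op s (op t (sub u v)) = op (op s t) (sub u v) := (hassoc _ _ _).symm
        _ = sub (op (op s t) u) v := t9 h (op s t) u v
    rwa [he] at h1
  exact hMC _ hrM (hglue _ _ hc₁ hc₂)

/-- germ relation on (prime filter, element) pairs -/
def gRel (op sub : A → A → A) (z : A)
    (q₁ q₂ : {p : Set A // isPF op sub z p} × A) : Prop :=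
  q₁.1 = q₂.1 ∧ (q₁.2 = q₂.2 ∨ ∃ c ∈ q₁.1.1, op c q₁.2 = op c q₂.2)

lemma gRel_equiv (h : IsMinusAlg op sub z) : Equivalence (gRel op sub z) := by
  obtain ⟨hop, hassoc, hidem, hnorm, hss, hopz, hzop, h8, h9, h10, hq⟩ := id h
  constructor
  · exact fun q => ⟨rfl, Or.inl rfl⟩
  · rintro ⟨p, x⟩ ⟨q, y⟩ ⟨hpq, hor⟩
    cases hpq
    exact ⟨rfl, hor.imp Eq.symm (fun ⟨c, hc, e⟩ => ⟨c, hc, e.symm⟩)⟩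
  · rintro ⟨p, x⟩ ⟨q, y⟩ ⟨r, w⟩ ⟨hpq, h₁⟩ ⟨hqr, h₂⟩
    cases hpq
    cases hqr
    refine ⟨rfl, ?_⟩
    rcases h₁ with rfl | ⟨c, hc, e₁⟩
    · exact h₂
    · rcases h₂ with rfl | ⟨d, hd, e₂⟩
      · exact Or.inr ⟨c, hc, e₁⟩
      · refine Or.inr ⟨op c d, p.2.1.1 c hc d hd, ?_⟩
        calc op (op c d) x = op (op d c) x := hnorm c d x
          _ = op d (op c x) := hassoc _ _ _
          _ = op d (op c y) := by rw [e₁]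
          _ = op (op d c) y := (hassoc _ _ _).symm
          _ = op (op c d) y := hnorm d c y
          _ = op c (op d y) := hassoc _ _ _
          _ = op c (op d w) := by rw [e₂]
          _ = op (op c d) w := (hassoc _ _ _).symm

def gSetoid (h : IsMinusAlg op sub z) :
    Setoid ({p : Set A // isPF op sub z p} × A) :=
  ⟨gRel op sub z, gRel_equiv h⟩

end MinusAlgAux

open MinusAlgAux in
/-- Representation of minus-algebras: every minus-algebra `(A, sub)` is
isomorphic to an algebra of partial functions under the minus operation:
there are sets `X`, `Y` and an injective `Φ : A → (X →. Y)` with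
`y ∈ Φ (sub a b) x` iff `y ∈ Φ a x` and `x ∉ dom (Φ b)`; consequently the
constant `0` is represented by the empty partial function and `Φ (op a b)`
is the restriction of `Φ b` to the domain of `Φ a`. -/
theorem stmt19 {A : Type u} (op sub : A → A → A) (zero : A)
    (h : IsMinusAlg op sub zero) :
    ∃ (X Y : Type u) (Φ : A → X →. Y), Function.Injective Φ ∧
      (∀ (a b : A) (x : X) (y : Y),
        y ∈ Φ (sub a b) x ↔ (y ∈ Φ a x ∧ ¬ (Φ b x).Dom)) ∧
      (∀ x : X, ¬ (Φ zero x).Dom) ∧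
      (∀ (a b : A) (x : X) (y : Y),
        y ∈ Φ (op a b) x ↔ ((Φ a x).Dom ∧ y ∈ Φ b x)) := by
  classical
  obtain ⟨hop, hassoc, hidem, hnorm, hss, hopz, hzop, h8, h9, h10, hq⟩ := id h
  set X : Type u := {p : Set A // isPF op sub zero p} with hX
  set sR : Setoid (X × A) := gSetoid h with hsR
  set Y : Type u := Quotient sR with hY
  set Φ : A → X →. Y :=
    fun a p => Part.mk (a ∈ p.1) (fun _ => Quotient.mk sR (p, a)) with hΦ
  -- basic membership facts about prime filters
  have memSub : ∀ (p : X) (a b : A), sub a b ∈ p.1 ↔ (a ∈ p.1 ∧ b ∉ p.1) := by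
    intro p a b
    obtain ⟨⟨pF1, pF2⟩, pz, pPr⟩ := p.2
    constructor
    · intro hd
      refine ⟨pF2 _ hd a (xsub h a b), fun hb => ?_⟩
      have := pF1 _ hd b hb
      rw [h9 a b] at this
      exact pz this
    · rintro ⟨haP, hbP⟩
      rcases pPr a haP b with hab | hab
      · exact absurd (pF2 _ hab b (le_op_right h a b)) hbP
      · exact hab
  have memOp : ∀ (p : X) (a b : A), op a b ∈ p.1 ↔ (a ∈ p.1 ∧ b ∈ p.1) := by
    intro p a b
    obtain ⟨⟨pF1, pF2⟩, pz, pPr⟩ := p.2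
    constructor
    · intro hd
      exact ⟨pF2 _ hd a (le_op_left h a b), pF2 _ hd b (le_op_right h a b)⟩
    · rintro ⟨haP, hbP⟩
      exact pF1 a haP b hbP
  have germSub : ∀ (p : X) (a b : A), sub a b ∈ p.1 →
      Quotient.mk sR (p, sub a b) = Quotient.mk sR (p, a) := by
    intro p a b hd
    refine Quotient.sound ⟨rfl, Or.inr ⟨sub a b, hd, ?_⟩⟩
    show op (sub a b) (sub a b) = op (sub a b) a
    rw [hidem, h8]
  have germOp : ∀ (p : X) (a b : A), op a b ∈ p.1 →
      Quotient.mk sR (p, op a b) = Quotient.mk sR (p, b) := by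
    intro p a b hd
    refine Quotient.sound ⟨rfl, Or.inr ⟨op a b, hd, ?_⟩⟩
    show op (op a b) (op a b) = op (op a b) b
    rw [hidem, hassoc, hidem]
  refine ⟨X, Y, Φ, ?_, ?_, ?_, ?_⟩
  · -- injectivity
    intro a b hab
    by_contra hne
    have hDom : ∀ p : X, a ∈ p.1 ↔ b ∈ p.1 := by
      intro p
      have := congrArg Part.Dom (congrFun hab p)
      exact Iff.of_eq this
    have hGerm : ∀ p : X, a ∈ p.1 → ∃ c ∈ p.1, op c a = op c b := by
      intro p hpa
      have hmem : Quotient.mk sR (p, a) ∈ Φ a p := ⟨hpa, rfl⟩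
      rw [hab] at hmem
      obtain ⟨hb, heq⟩ := hmem
      have := Quotient.exact heq
      obtain ⟨-, hor⟩ := this
      rcases hor with he | ⟨c, hc, e⟩
      · exact absurd he.symm hne
      · exact ⟨c, hc, e.symm⟩
    -- step 1 : sub a b = zero and sub b a = zero
    have hzero : ∀ u v : A, (∀ p : X, u ∈ p.1 ↔ v ∈ p.1) → sub u v = zero := by
      intro u v hDom'
      by_contra hsne
      have ha : ∀ c, op c (sub u v) = sub u v → c ∉ ({zero} : Set A) := by
        intro c hc hcz
        rw [Set.mem_singleton_iff] at hcz
        subst hcz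
        rw [hzop] at hc
        exact hsne hc.symm
      obtain ⟨p, hpPF, hpd, hpC⟩ := existsPF h {zero} rfl
        (by rintro c rfl d hd; rw [hzop] at hd; exact hd ▸ rfl)
        (by rintro c rfl d; exact hopz d)
        (by
          rintro r v hrv hrs
          rw [Set.mem_singleton_iff] at hrv hrs ⊢
          apply hq r zero v
          · rw [hrs, z_sub h]
          · rw [hopz, t12 h hrv])
        ha
      obtain ⟨⟨pF1, pF2⟩, pz, pPr⟩ := hpPF
      have hup : u ∈ p := pF2 _ hpd u (xsub h u v)
      have hvp : v ∉ p := by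
        intro hvp
        have := pF1 _ hpd v hvp
        rw [h9 u v] at this
        exact pz this
      exact hvp ((hDom' ⟨p, ⟨⟨pF1, pF2⟩, pz, pPr⟩⟩).1 hup)
    have hab1 : sub a b = zero := hzero a b hDom
    have hab2 : sub b a = zero := hzero b a (fun p => (hDom p).symm)
    have hba : op b a = a := t7a h hab1
    have hab' : op a b = b := t7a h hab2
    -- step 2+3 : separate via C = {c | op c a = op c b}
    set C : Set A := {c | op c a = op c b} with hC
    have hzC : zero ∈ C := by
      show op zero a = op zero b
      rw [hzop, hzop]
    have hdown : ∀ c ∈ C, ∀ d, op c d = d → d ∈ C := by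
      intro c hc d hcd
      show op d a = op d b
      calc op d a = op (op c d) a := by rw [hcd]
        _ = op (op d c) a := hnorm c d a
        _ = op d (op c a) := hassoc _ _ _
        _ = op d (op c b) := by rw [hc]
        _ = op (op d c) b := (hassoc _ _ _).symm
        _ = op (op c d) b := hnorm d c b
        _ = op d b := by rw [hcd]
    have hmult : ∀ c ∈ C, ∀ d, op d c ∈ C := by
      intro c hc d
      show op (op d c) a = op (op d c) b
      rw [hassoc, hassoc, hc]
    have hglue : ∀ r v, op r v ∈ C → sub r v ∈ C → r ∈ C := by
      intro r v hrv hrs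
      show op r a = op r b
      apply hq (op r a) (op r b) v
      · have e1 := h10 r v a
        have e2 := h10 r v b
        rw [← e1, ← e2, hrs]
      · calc op v (op r a) = op (op v r) a := (hassoc _ _ _).symm
          _ = op (op r v) a := hnorm v r a
          _ = op (op r v) b := hrv
          _ = op (op v r) b := hnorm r v b
          _ = op v (op r b) := hassoc _ _ _
    have hup : ∀ c, op c a = a → c ∉ C := by
      intro c hc hcC
      have h1 : a = op c b := hc ▸ hcC
      have h2 : b = a := by
        calc b = op a b := hab'.symm
          _ = op (op c b) b := by rw [← h1]
          _ = op c (op b b) := hassoc _ _ _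
          _ = op c b := by rw [hidem]
          _ = a := h1.symm
      exact hne h2.symm
    obtain ⟨p, hpPF, hpa, hpC⟩ := existsPF h C hzC hdown hmult hglue hup
    obtain ⟨c, hc, hcab⟩ := hGerm ⟨p, hpPF⟩ hpa
    exact hpC c hc hcab
  · -- the minus condition
    intro a b p y
    constructor
    · rintro ⟨hd, rfl⟩
      have hd' : sub a b ∈ p.1 := hd
      obtain ⟨haP, hbP⟩ := (memSub p a b).1 hd'
      exact ⟨⟨haP, (germSub p a b hd').symm⟩, hbP⟩
    · rintro ⟨⟨haP, rfl⟩, hbP⟩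
      have hd : sub a b ∈ p.1 := (memSub p a b).2 ⟨haP, hbP⟩
      exact ⟨hd, germSub p a b hd⟩
  · -- zero is empty
    intro p
    exact p.2.2.1
  · -- the restriction condition
    intro a b p y
    constructor
    · rintro ⟨hd, rfl⟩
      have hd' : op a b ∈ p.1 := hd
      obtain ⟨haP, hbP⟩ := (memOp p a b).1 hd'
      exact ⟨haP, hbP, (germOp p a b hd').symm⟩
    · rintro ⟨haP, hbP, rfl⟩
      have hd : op a b ∈ p.1 := (memOp p a b).2 ⟨haP, hbP⟩
      exact ⟨hd, germOp p a b hd⟩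
end
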